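/- arXiv:math/0702354 — 11 statements merged into one kernel-verified Lean document; each statement's English description precedes it below -/
import Mathlib

section
/- Let G be a bipartite graph with partite sets M and N such that every vertex x in M has degree at least k, and every pair of vertices y, z in N have at least k common neighbours. Then G is k-connected. -/
def IsKConnected {V : Type*} (k : ℕ) (G : SimpleGraph V) : Prop :=
  k < Nat.card V ∧ ∀ S : Set V, S.ncard < k → (G.induce Sᶜ).Connected

theorem stmt0 {V : Type*} [Fintype V] [Nonempty V] (k : ℕ) (hk : 0 < k)
    (G : SimpleGraph V) (M N : Set V)
    (hpart : M ∪ N = Set.univ) (hdisj : Disjoint M N)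
    (hbip : ∀ a b, G.Adj a b → (a ∈ M ∧ b ∈ N) ∨ (a ∈ N ∧ b ∈ M))
    (hdeg : ∀ x ∈ M, k ≤ (G.neighborSet x).ncard)
    (hcn : ∀ y ∈ N, ∀ z ∈ N, k ≤ (G.neighborSet y ∩ G.neighborSet z).ncard) :
    IsKConnected k G := by
  classical
  have hMN : ∀ x ∈ M, G.neighborSet x ⊆ N := by
    intro x hx y hy
    rcases hbip x y hy with ⟨_, h2⟩ | ⟨h1, _⟩
    · exact h2
    · exact absurd h1 (Set.disjoint_left.mp hdisj hx)
  have hNM : ∀ y ∈ N, G.neighborSet y ⊆ M := by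
    intro y hy x hx
    rcases hbip y x hx with ⟨h1, _⟩ | ⟨_, h2⟩
    · exact absurd h1 (Set.disjoint_right.mp hdisj hy)
    · exact h2
  -- M is nonempty
  obtain ⟨v⟩ := ‹Nonempty V›
  have hv : v ∈ M ∪ N := hpart ▸ Set.mem_univ v
  have hMne : ∃ x, x ∈ M := by
    rcases hv with h | h
    · exact ⟨v, h⟩
    · have h1 := hcn v h v h
      have hne : (G.neighborSet v ∩ G.neighborSet v).Nonempty := by
        apply Set.nonempty_of_ncard_ne_zero; omega
      obtain ⟨x, hx, -⟩ := hne
      exact ⟨x, hNM v h hx⟩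
  obtain ⟨x0, hx0⟩ := hMne
  have hNk : k ≤ N.ncard := by
    calc k ≤ (G.neighborSet x0).ncard := hdeg x0 hx0
    _ ≤ N.ncard := Set.ncard_le_ncard (hMN x0 hx0) (Set.toFinite _)
  have hx0N : x0 ∉ N := Set.disjoint_left.mp hdisj hx0
  have hcard : k < Nat.card V := by
    rw [← Set.ncard_univ]
    have h1 : (insert x0 N).ncard = N.ncard + 1 :=
      Set.ncard_insert_of_notMem hx0N (Set.toFinite _)
    have h2 : (insert x0 N).ncard ≤ (Set.univ : Set V).ncard :=
      Set.ncard_le_ncard (Set.subset_univ _) (Set.toFinite _)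
    omega
  refine ⟨hcard, fun S hS => ?_⟩
  have step1 : ∀ x ∈ M, ∃ y ∈ N, y ∉ S ∧ G.Adj x y := by
    intro x hx
    obtain ⟨y, hy, hyS⟩ := Set.exists_mem_notMem_of_ncard_lt_ncard
      (lt_of_lt_of_le hS (hdeg x hx)) (Set.toFinite _)
    exact ⟨y, hMN x hx hy, hyS, hy⟩
  have step2 : ∀ y ∈ N, ∀ z ∈ N, ∃ x, x ∉ S ∧ G.Adj x y ∧ G.Adj x z := by
    intro y hy z hz
    obtain ⟨x, hx, hxS⟩ := Set.exists_mem_notMem_of_ncard_lt_ncard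
      (lt_of_lt_of_le hS (hcn y hy z hz)) (Set.toFinite _)
    exact ⟨x, hxS, hx.1.symm, hx.2.symm⟩
  have hne : Nonempty ↥(Sᶜ) := by
    obtain ⟨w, -, hw⟩ := Set.exists_mem_notMem_of_ncard_lt_ncard
      (show S.ncard < (Set.univ : Set V).ncard by rw [Set.ncard_univ]; omega)
      (Set.toFinite _)
    exact ⟨⟨w, hw⟩⟩
  -- every vertex of the induced graph reaches a vertex of N
  have toN : ∀ u : ↥(Sᶜ), ∃ w : ↥(Sᶜ), ↑w ∈ N ∧ (G.induce Sᶜ).Reachable u w := by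
    intro u
    have hu : (u : V) ∈ M ∪ N := hpart ▸ Set.mem_univ _
    rcases hu with h | h
    · obtain ⟨y, hyN, hyS, hadj⟩ := step1 u h
      refine ⟨⟨y, hyS⟩, hyN, SimpleGraph.Adj.reachable ?_⟩
      simpa using hadj
    · exact ⟨u, h, SimpleGraph.Reachable.refl u⟩
  have reachN : ∀ w w' : ↥(Sᶜ), ↑w ∈ N → ↑w' ∈ N → (G.induce Sᶜ).Reachable w w' := by
    intro w w' hw hw'
    obtain ⟨x, hxS, h1, h2⟩ := step2 w hw w' hw'
    have hx : (⟨x, hxS⟩ : ↥(Sᶜ)) = (⟨x, hxS⟩ : ↥(Sᶜ)) := rfl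
    have r1 : (G.induce Sᶜ).Reachable w ⟨x, hxS⟩ := SimpleGraph.Adj.reachable (by simpa using h1.symm)
    have r2 : (G.induce Sᶜ).Reachable (⟨x, hxS⟩ : ↥(Sᶜ)) w' := SimpleGraph.Adj.reachable (by simpa using h2)
    exact r1.trans r2
  constructor
  intro u u'
  obtain ⟨w, hwN, hr⟩ := toN u
  obtain ⟨w', hwN', hr'⟩ := toN u'
  exact (hr.trans (reachN w w' hwN hwN')).trans hr'.symm
end

section
/- In any 2-colouring of the edges of the complete graph K_n in which every vertex has red degree at least 2k-2, either the red graph is k-connected, or the blue graph contains a k-connected subgraph on at least n - k + 1 vertices. -/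
def colorGraph (n r : ℕ) (f : Sym2 (Fin n) → Fin r) (i : Fin r) :
    SimpleGraph (Fin n) where
  Adj a b := a ≠ b ∧ f s(a, b) = i
  symm := ⟨fun a b h => ⟨h.1.symm, by rw [Sym2.eq_swap]; exact h.2⟩⟩
  loopless := ⟨fun a h => h.1 rfl⟩

/-!
If the red graph `R` is not `k`-connected, some set `S` of fewer than `k` vertices splits `R - S`
into two parts with no red edge between them. A vertex of either part has all its `≥ 2k - 2` red
neighbours in its own part or in `S`, so each part has at least `k` vertices. All edges between
the parts are blue, so the blue graph on `V ∖ S` contains a spanning complete bipartite graph with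
both sides of size `≥ k`, which is `k`-connected.
-/

namespace SimpleGraph

variable {V : Type*}

theorem ncard_neighborSet_lt_of_subset [Finite V] {G : SimpleGraph V} {P S : Set V} {v : V}
    (hv : v ∈ P) (hN : G.neighborSet v ⊆ P ∪ S) :
    (G.neighborSet v).ncard < P.ncard + S.ncard := by
  have hN' : G.neighborSet v ⊆ (P \ {v}) ∪ S := fun w hw =>
    (hN hw).imp (fun hwP => ⟨hwP, fun h => hw.ne h.symm⟩) id
  calc (G.neighborSet v).ncard ≤ ((P \ {v}) ∪ S).ncard := Set.ncard_le_ncard hN'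
    _ ≤ (P \ {v}).ncard + S.ncard := Set.ncard_union_le _ _
    _ < P.ncard + S.ncard := by
      have := Set.ncard_sdiff_singleton_lt_of_mem hv
      omega

theorem exists_adj_closed_of_not_preconnected {G : SimpleGraph V} (h : ¬G.Preconnected) :
    ∃ C : Set V, C.Nonempty ∧ Cᶜ.Nonempty ∧ ∀ u ∈ C, ∀ w, G.Adj u w → w ∈ C := by
  simp only [Preconnected, not_forall] at h
  obtain ⟨x, y, hxy⟩ := h
  exact ⟨{w | G.Reachable x w}, ⟨x, .rfl⟩, ⟨y, hxy⟩, fun u hu w huw => hu.trans huw.reachable⟩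

theorem le_ncard_of_adj_closed [Finite V] {G : SimpleGraph V} {k : ℕ}
    (hdeg : ∀ v, 2 * k - 2 ≤ (G.neighborSet v).ncard) {S : Set V} (hS : S.ncard < k)
    {C : Set ↥Sᶜ} (hC : C.Nonempty) (hclosed : ∀ u ∈ C, ∀ w, (G.induce Sᶜ).Adj u w → w ∈ C) :
    k ≤ C.ncard := by
  obtain ⟨v, hv⟩ := hC
  have hN : G.neighborSet v ⊆ Subtype.val '' C ∪ S := fun w hw => by
    by_cases hwS : w ∈ S
    · exact Or.inr hwS
    · exact Or.inl ⟨⟨w, hwS⟩, hclosed v hv _ hw, rfl⟩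
  have hlt := ncard_neighborSet_lt_of_subset (Set.mem_image_of_mem _ hv) hN
  rw [Set.ncard_image_of_injective _ Subtype.val_injective] at hlt
  have := hdeg v
  omega

end SimpleGraph

open SimpleGraph

theorem isKConnected_of_forall_adj_compl {V : Type*} [Finite V] {G : SimpleGraph V} {k : ℕ}
    {C : Set V} (hadj : ∀ c ∈ C, ∀ d ∉ C, G.Adj c d) (hk : 0 < k) (hC : k ≤ C.ncard)
    (hCc : k ≤ Cᶜ.ncard) : IsKConnected k G := by
  refine ⟨by have := Set.ncard_add_ncard_compl C; omega, fun S hS => ?_⟩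
  obtain ⟨c, hcC, hcS⟩ := Set.exists_mem_notMem_of_ncard_lt_ncard (hS.trans_le hC)
  obtain ⟨d, hdC, hdS⟩ := Set.exists_mem_notMem_of_ncard_lt_ncard (hS.trans_le hCc)
  have hcd : (G.induce Sᶜ).Adj ⟨c, hcS⟩ ⟨d, hdS⟩ := hadj c hcC d hdC
  refine (connected_iff_exists_forall_reachable _).2 ⟨⟨c, hcS⟩, fun ⟨u, huS⟩ => ?_⟩
  by_cases huC : u ∈ C
  · have hdu : (G.induce Sᶜ).Adj ⟨d, hdS⟩ ⟨u, huS⟩ := (hadj u huC d hdC).symm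
    exact hcd.reachable.trans hdu.reachable
  · have hcu : (G.induce Sᶜ).Adj ⟨c, hcS⟩ ⟨u, huS⟩ := hadj c hcC u huC
    exact hcu.reachable

theorem isKConnected_or_isKConnected_compl_induce {V : Type*} [Finite V] (G : SimpleGraph V)
    {k : ℕ} (hV : 2 ≤ Nat.card V) (hdeg : ∀ v, 2 * k - 2 ≤ (G.neighborSet v).ncard) :
    IsKConnected k G ∨
      ∃ A : Set V, Nat.card V - k + 1 ≤ A.ncard ∧ IsKConnected k (Gᶜ.induce A) := by
  have hkV : k < Nat.card V := by
    obtain ⟨v⟩ : Nonempty V := (Nat.card_pos_iff.1 (by omega)).1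
    have hlt := ncard_neighborSet_lt_of_subset (G := G) (S := ∅) (Set.mem_univ v)
      (Set.subset_union_of_subset_left (Set.subset_univ _) _)
    rw [Set.ncard_univ, Set.ncard_empty] at hlt
    have := hdeg v
    omega
  refine or_iff_not_imp_left.2 fun hG => ?_
  obtain ⟨S, hS, hdisc⟩ : ∃ S : Set V, S.ncard < k ∧ ¬(G.induce Sᶜ).Connected := by
    simpa [IsKConnected, hkV] using hG
  have : Nonempty ↥Sᶜ := Set.Nonempty.to_subtype <| Set.nonempty_compl.2 fun h => by
    rw [h, Set.ncard_univ] at hS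
    omega
  obtain ⟨C, hC, hCc, hclosed⟩ := exists_adj_closed_of_not_preconnected fun h => hdisc ⟨h⟩
  have hclosed_compl : ∀ u ∈ Cᶜ, ∀ w, (G.induce Sᶜ).Adj u w → w ∈ Cᶜ :=
    fun u hu w huw hw => hu (hclosed w hw u huw.symm)
  have hadj : ∀ c ∈ C, ∀ d ∉ C, (Gᶜ.induce Sᶜ).Adj c d := fun c hc d hd =>
    (compl_adj G c d).2
      ⟨fun h => hd (Subtype.val_injective h ▸ hc), fun h => hd (hclosed c hc d h)⟩
  exact ⟨Sᶜ, by rw [Set.ncard_compl]; omega, isKConnected_of_forall_adj_compl hadj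
    (by omega) (le_ncard_of_adj_closed hdeg hS hC hclosed)
    (le_ncard_of_adj_closed hdeg hS hCc hclosed_compl)⟩

theorem colorGraph_one_eq_compl {n : ℕ} (f : Sym2 (Fin n) → Fin 2) :
    colorGraph n 2 f 1 = (colorGraph n 2 f 0)ᶜ := by
  ext a b
  simp only [colorGraph, compl_adj, not_and, and_congr_right_iff]
  omega

theorem stmt3_general (n k : ℕ) (hn : 2 ≤ n)
    (f : Sym2 (Fin n) → Fin 2)
    (hdeg : ∀ v : Fin n, 2 * k - 2 ≤ ((colorGraph n 2 f 0).neighborSet v).ncard) :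
    IsKConnected k (colorGraph n 2 f 0) ∨
      ∃ A : Set (Fin n), n - k + 1 ≤ A.ncard ∧
        IsKConnected k ((colorGraph n 2 f 1).induce A) := by
  have h := isKConnected_or_isKConnected_compl_induce (colorGraph n 2 f 0)
    (by rwa [Nat.card_fin]) hdeg
  rwa [Nat.card_fin, ← colorGraph_one_eq_compl] at h

theorem stmt3 (n k : ℕ) (hn : 2 ≤ n) (hk : 1 ≤ k)
    (f : Sym2 (Fin n) → Fin 2)
    (hdeg : ∀ v : Fin n, 2 * k - 2 ≤ ((colorGraph n 2 f 0).neighborSet v).ncard) :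
    IsKConnected k (colorGraph n 2 f 0) ∨
      ∃ A : Set (Fin n), n - k + 1 ≤ A.ncard ∧
        IsKConnected k ((colorGraph n 2 f 1).induce A) :=
  stmt3_general n k hn f hdeg
end

section
/- Let m, n be positive integers and c ∈ [0,1]. If G is a bipartite graph with partite sets of sizes m and n, and G has at least c·m·n edges, then G has a connected component with at least c·(m+n) vertices. -/
set_option maxHeartbeats 1000000 in
theorem stmt5 {V : Type*} [Fintype V] (m n : ℕ) (hm : 0 < m) (hn : 0 < n)
    (c : ℝ) (hc0 : 0 ≤ c) (hc1 : c ≤ 1)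
    (G : SimpleGraph V) (M N : Set V)
    (hpart : M ∪ N = Set.univ) (hdisj : Disjoint M N)
    (hbip : ∀ a b, G.Adj a b → (a ∈ M ∧ b ∈ N) ∨ (a ∈ N ∧ b ∈ M))
    (hM : M.ncard = m) (hN : N.ncard = n)
    (he : c * m * n ≤ (G.edgeSet.ncard : ℝ)) :
    ∃ K : G.ConnectedComponent, c * ((m : ℝ) + n) ≤ (K.supp.ncard : ℝ) := by
  classical
  have hMne : M.Nonempty := by
    rw [← Set.ncard_pos M.toFinite, hM]; exact hm
  obtain ⟨v₀, hv₀⟩ := hMne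
  haveI : Nonempty V := ⟨v₀⟩
  haveI : Fintype G.ConnectedComponent := Fintype.ofFinite _
  haveI : Nonempty G.ConnectedComponent := ⟨G.connectedComponentMk v₀⟩
  by_contra hcon
  push_neg at hcon
  set cc : V → G.ConnectedComponent := G.connectedComponentMk with hcc
  set MF : Finset V := M.toFinset with hMF
  set NF : Finset V := N.toFinset with hNF
  set fa : G.ConnectedComponent → ℕ := fun K => (MF.filter (fun v => cc v = K)).card with hfa
  set fb : G.ConnectedComponent → ℕ := fun K => (NF.filter (fun v => cc v = K)).card with hfb
  have hsuma : ∑ K, fa K = m := by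
    rw [← hM, Set.ncard_eq_toFinset_card']
    exact (Finset.card_eq_sum_card_fiberwise (fun x _ => Finset.mem_univ (cc x))).symm
  have hsumb : ∑ K, fb K = n := by
    rw [← hN, Set.ncard_eq_toFinset_card']
    exact (Finset.card_eq_sum_card_fiberwise (fun x _ => Finset.mem_univ (cc x))).symm
  have hMN : ∀ v : V, v ∈ M ∨ v ∈ N := by
    intro v
    rw [← Set.mem_union, hpart]; trivial
  have hsupp : ∀ K : G.ConnectedComponent, K.supp.ncard = fa K + fb K := by
    intro K
    have h1 : K.supp.toFinset =
        MF.filter (fun v => cc v = K) ∪ NF.filter (fun v => cc v = K) := by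
      rw [← Finset.filter_union]
      ext v
      simp only [Set.mem_toFinset, SimpleGraph.ConnectedComponent.mem_supp_iff,
        Finset.mem_filter, Finset.mem_union, hMF, hNF]
      constructor
      · intro h; exact ⟨hMN v, h⟩
      · intro h; exact h.2
    have hdisj' : Disjoint (MF.filter (fun v => cc v = K)) (NF.filter (fun v => cc v = K)) := by
      apply Finset.disjoint_filter_filter
      rw [hMF, hNF, Set.disjoint_toFinset]
      exact hdisj
    rw [Set.ncard_eq_toFinset_card', h1, Finset.card_union_of_disjoint hdisj']
  have hsupppos : ∀ K : G.ConnectedComponent, 1 ≤ fa K + fb K := by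
    intro K
    rw [← hsupp K]
    obtain ⟨v, hv⟩ := K.exists_rep
    have hv' : v ∈ K.supp := by
      rw [SimpleGraph.ConnectedComponent.mem_supp_iff]; exact hv
    have := (Set.ncard_pos K.supp.toFinite).mpr ⟨v, hv'⟩
    omega
  -- edge counting
  set Q : Finset (V × V) := (MF ×ˢ NF).filter (fun p => G.Adj p.1 p.2) with hQ
  set P : Finset (V × V) := (MF ×ˢ NF).filter (fun p => cc p.1 = cc p.2) with hP
  have hEQ : G.edgeSet.ncard ≤ Q.card := by
    rw [Set.ncard_eq_toFinset_card']
    apply Finset.card_le_card_of_surjOn (fun p : V × V => s(p.1, p.2))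
    intro e he'
    rw [Finset.mem_coe, Set.mem_toFinset] at he'
    induction e using Sym2.ind with
    | _ u v =>
      rw [SimpleGraph.mem_edgeSet] at he'
      rcases hbip u v he' with ⟨hu, hv⟩ | ⟨hu, hv⟩
      · refine ⟨(u, v), ?_, rfl⟩
        simp only [Finset.coe_filter, Set.mem_setOf_eq, Finset.mem_product, hQ, hMF, hNF,
          Set.mem_toFinset, Finset.mem_filter]
        exact ⟨⟨hu, hv⟩, he'⟩
      · refine ⟨(v, u), ?_, Sym2.eq_swap⟩
        simp only [Finset.coe_filter, Set.mem_setOf_eq, Finset.mem_product, hQ, hMF, hNF,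
          Set.mem_toFinset, Finset.mem_filter]
        exact ⟨⟨hv, hu⟩, he'.symm⟩
  have hQP : Q ⊆ P := by
    intro p hp
    simp only [hQ, hP, Finset.mem_filter] at hp ⊢
    exact ⟨hp.1, SimpleGraph.ConnectedComponent.sound hp.2.reachable⟩
  have hPcard : P.card = ∑ K, fa K * fb K := by
    rw [Finset.card_eq_sum_card_fiberwise
      (f := fun p : V × V => cc p.1) (t := Finset.univ) (fun x _ => Finset.mem_univ _)]
    refine Finset.sum_congr rfl (fun K _ => ?_)
    rw [hfa, hfb, ← Finset.card_product]
    congr 1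
    ext ⟨u, v⟩
    simp only [Finset.mem_filter, Finset.mem_product, hP]
    constructor
    · rintro ⟨⟨⟨hu, hv⟩, heq⟩, hK⟩
      exact ⟨⟨hu, hK⟩, ⟨hv, heq ▸ hK⟩⟩
    · rintro ⟨⟨hu, hK⟩, ⟨hv, hK'⟩⟩
      exact ⟨⟨⟨hu, hv⟩, hK.trans hK'.symm⟩, hK⟩
  -- real arithmetic
  have hm1 : (1:ℝ) ≤ (m:ℝ) := by exact_mod_cast hm
  have hn1 : (1:ℝ) ≤ (n:ℝ) := by exact_mod_cast hn
  have hmnpos : (0:ℝ) < (m:ℝ) + n := by linarith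
  have key : ∀ K : G.ConnectedComponent,
      (fa K : ℝ) * (fb K) * ((m:ℝ) + n) < c * ((n:ℝ)^2 * fa K + (m:ℝ)^2 * fb K) := by
    intro K
    have hK := hcon K
    rw [hsupp K] at hK
    push_cast at hK
    have hKpos : (1:ℝ) ≤ (fa K : ℝ) + fb K := by exact_mod_cast hsupppos K
    set a := (fa K : ℝ) with ha'
    set b := (fb K : ℝ) with hb'
    have ha : 0 ≤ a := Nat.cast_nonneg _
    have hb : 0 ≤ b := Nat.cast_nonneg _
    have hXpos : 0 < (n:ℝ)^2 * a + (m:ℝ)^2 * b := by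
      nlinarith [mul_nonneg (by nlinarith : (0:ℝ) ≤ (n:ℝ)^2 - 1) ha,
        mul_nonneg (by nlinarith : (0:ℝ) ≤ (m:ℝ)^2 - 1) hb]
    have h1 : a * b * ((m:ℝ) + n)^2 ≤ (a + b) * ((n:ℝ)^2 * a + (m:ℝ)^2 * b) := by
      nlinarith [sq_nonneg ((n:ℝ) * a - (m:ℝ) * b)]
    have h2 : (a + b) * ((n:ℝ)^2 * a + (m:ℝ)^2 * b)
        < (c * ((m:ℝ) + n)) * ((n:ℝ)^2 * a + (m:ℝ)^2 * b) :=
      mul_lt_mul_of_pos_right hK hXpos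
    nlinarith [h1, h2, hmnpos]
  have hlt : ∑ K, (fa K : ℝ) * (fb K) * ((m:ℝ) + n)
      < ∑ K, c * ((n:ℝ)^2 * fa K + (m:ℝ)^2 * fb K) :=
    Finset.sum_lt_sum_of_nonempty Finset.univ_nonempty (fun K _ => key K)
  have hsR : ∑ K, c * ((n:ℝ)^2 * fa K + (m:ℝ)^2 * fb K) = c * m * n * ((m:ℝ) + n) := by
    rw [← Finset.mul_sum, Finset.sum_add_distrib, ← Finset.mul_sum, ← Finset.mul_sum]
    rw [← Nat.cast_sum, ← Nat.cast_sum, hsuma, hsumb]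
    ring
  have hsL : ∑ K, (fa K : ℝ) * (fb K) * ((m:ℝ) + n)
      = (∑ K, (fa K : ℝ) * (fb K)) * ((m:ℝ) + n) := by
    rw [Finset.sum_mul]
  have hEX : c * m * n ≤ ∑ K, (fa K : ℝ) * (fb K) := by
    refine le_trans he ?_
    calc (G.edgeSet.ncard : ℝ) ≤ (Q.card : ℝ) := by exact_mod_cast hEQ
      _ ≤ (P.card : ℝ) := by exact_mod_cast Finset.card_le_card hQP
      _ = ∑ K, (fa K : ℝ) * (fb K) := by rw [hPcard]; push_cast; rfl
  rw [hsL, hsR] at hlt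
  nlinarith [mul_le_mul_of_nonneg_right hEX (le_of_lt hmnpos)]
end

section
/- In any r-colouring of the edges of the complete bipartite graph K_{m,n}, there is a monochromatic connected subgraph (a component of one of the colour classes) of order at least (m+n)/r. -/
def bipColor (m n r : ℕ) (f : Sym2 (Fin m ⊕ Fin n) → Fin r) (i : Fin r) :
    SimpleGraph (Fin m ⊕ Fin n) where
  Adj a b := (completeBipartiteGraph (Fin m) (Fin n)).Adj a b ∧ f s(a, b) = i
  symm := ⟨fun a b h => ⟨(completeBipartiteGraph (Fin m) (Fin n)).symm.symm a b h.1,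
    by rw [Sym2.eq_swap]; exact h.2⟩⟩
  loopless := ⟨fun a h => (completeBipartiteGraph (Fin m) (Fin n)).loopless.irrefl a h.1⟩

/-!
Suppose every monochromatic component `K` has `r |K| < m + n`, and write `L K`, `R K` for the
numbers of its vertices in the two sides. The components containing a left vertex `a` (one per
colour) together cover the whole right side, and their sizes add up to less than `m + n`, so their
left parts add up to less than `m`. Summing over `a` gives `∑ L K ^ 2 < m ^ 2`, symmetrically
`∑ R K ^ 2 < n ^ 2`, while the same covering gives `∑ L K * R K ≥ m n`. This contradicts
Cauchy–Schwarz.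
-/

open Finset

namespace SimpleGraph.ConnectedComponent

variable {V α β ι : Type*} [Fintype α] [Fintype β] [Fintype ι]

open Classical in
noncomputable def suppPreimage {G : SimpleGraph V} (e : α → V) (K : G.ConnectedComponent) :
    Finset α :=
  {a | G.connectedComponentMk (e a) = K}

theorem sum_card_suppPreimage_mul [Fintype V] [DecidableEq V] {G : SimpleGraph V}
    [DecidableRel G.Adj] (e : α → V) (F : G.ConnectedComponent → ℕ) :
    ∑ K, #(K.suppPreimage e) * F K = ∑ a, F (G.connectedComponentMk (e a)) := by
  classical
  rw [← Finset.sum_fiberwise' univ (fun a => G.connectedComponentMk (e a)) F]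
  simp [suppPreimage]

theorem ncard_supp_eq_card_suppPreimage_inl_add_inr {G : SimpleGraph (α ⊕ β)}
    (K : G.ConnectedComponent) :
    K.supp.ncard = #(K.suppPreimage Sum.inl) + #(K.suppPreimage Sum.inr) := by
  classical
  rw [Set.ncard_eq_toFinset_card', ← Finset.card_disjSum]
  congr 1
  ext (a | b) <;> simp [suppPreimage, mem_supp_iff]

variable {G : ι → SimpleGraph V}

theorem card_le_sum_card_suppPreimage (e : β → V) (v : V)
    (h : ∀ b, ∃ i, (G i).Reachable (e b) v) :
    Fintype.card β ≤ ∑ i, #(((G i).connectedComponentMk v).suppPreimage e) := by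
  classical
  calc Fintype.card β
      _ = #(univ.biUnion fun i => ((G i).connectedComponentMk v).suppPreimage e) := by
        rw [← card_univ]
        congr 1
        ext b
        simpa [suppPreimage] using h b
      _ ≤ _ := card_biUnion_le

theorem sum_ncard_supp_lt [Nonempty ι] {N : ℕ}
    (hsmall : ∀ i (K : (G i).ConnectedComponent), Fintype.card ι * K.supp.ncard < N) (v : V) :
    ∑ i, ((G i).connectedComponentMk v).supp.ncard < N := by
  refine Nat.lt_of_mul_lt_mul_left (a := Fintype.card ι) ?_
  calc Fintype.card ι * ∑ i, ((G i).connectedComponentMk v).supp.ncard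
      _ < ∑ _i : ι, N := by
        rw [mul_sum]
        exact sum_lt_sum_of_nonempty univ_nonempty fun i _ => hsmall i _
      _ = Fintype.card ι * N := by simp

theorem sum_sigma_card_suppPreimage_mul [Fintype V] [DecidableEq V]
    [∀ i, DecidableRel (G i).Adj] (e : α → V) (e' : β → V) :
    ∑ x : Σ i, (G i).ConnectedComponent, #(x.2.suppPreimage e) * #(x.2.suppPreimage e') =
      ∑ a, ∑ i, #(((G i).connectedComponentMk (e a)).suppPreimage e') := by
  rw [Fintype.sum_sigma, sum_comm]
  exact sum_congr rfl fun i _ => sum_card_suppPreimage_mul e _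

end SimpleGraph.ConnectedComponent

open SimpleGraph SimpleGraph.ConnectedComponent

theorem exists_card_add_card_le_card_mul_ncard_supp {α β ι : Type*} [Fintype α] [Fintype β]
    [Fintype ι] [Nonempty α] [Nonempty β] {G : ι → SimpleGraph (α ⊕ β)}
    (hcover : ∀ a b, ∃ i, (G i).Adj (.inl a) (.inr b)) :
    ∃ i, ∃ K : (G i).ConnectedComponent,
      Fintype.card α + Fintype.card β ≤ Fintype.card ι * K.supp.ncard := by
  classical
  set m := Fintype.card α
  set n := Fintype.card β
  by_contra! hsmall
  have : Nonempty ι := ⟨(hcover (Classical.arbitrary α) (Classical.arbitrary β)).choose⟩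
  let L (x : Σ i, (G i).ConnectedComponent) := #(x.2.suppPreimage Sum.inl)
  let R (x : Σ i, (G i).ConnectedComponent) := #(x.2.suppPreimage Sum.inr)
  have hvertex (v : α ⊕ β) : ∑ i, #(((G i).connectedComponentMk v).suppPreimage Sum.inl) +
      ∑ i, #(((G i).connectedComponentMk v).suppPreimage Sum.inr) < m + n := by
    simpa only [ncard_supp_eq_card_suppPreimage_inl_add_inr, sum_add_distrib]
      using sum_ncard_supp_lt hsmall v
  have hcover_inr (a : α) :
      n ≤ ∑ i, #(((G i).connectedComponentMk (.inl a)).suppPreimage Sum.inr) :=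
    card_le_sum_card_suppPreimage _ _ fun b => (hcover a b).imp fun _ h => h.symm.reachable
  have hcover_inl (b : β) :
      m ≤ ∑ i, #(((G i).connectedComponentMk (.inr b)).suppPreimage Sum.inl) :=
    card_le_sum_card_suppPreimage _ _ fun a => (hcover a b).imp fun _ h => h.reachable
  have hleft (a : α) : ∑ i, #(((G i).connectedComponentMk (.inl a)).suppPreimage Sum.inl) < m := by
    have := hvertex (.inl a)
    have := hcover_inr a
    omega
  have hright (b : β) :
      ∑ i, #(((G i).connectedComponentMk (.inr b)).suppPreimage Sum.inr) < n := by
    have := hvertex (.inr b)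
    have := hcover_inl b
    omega
  have hl : ∑ x, L x ^ 2 < m ^ 2 := by
    simp only [sq, L, sum_sigma_card_suppPreimage_mul]
    simpa using sum_lt_sum_of_nonempty univ_nonempty fun a _ => hleft a
  have hr : ∑ x, R x ^ 2 < n ^ 2 := by
    simp only [sq, R, sum_sigma_card_suppPreimage_mul]
    simpa using sum_lt_sum_of_nonempty univ_nonempty fun b _ => hright b
  have hlr : m * n ≤ ∑ x, L x * R x := by
    simp only [L, R, sum_sigma_card_suppPreimage_mul]
    simpa using sum_le_sum fun a (_ : a ∈ univ) => hcover_inr a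
  have := calc (m * n) ^ 2
      _ ≤ (∑ x, L x * R x) ^ 2 := Nat.pow_le_pow_left hlr 2
      _ ≤ (∑ x, L x ^ 2) * ∑ x, R x ^ 2 := sum_mul_sq_le_sq_mul_sq univ L R
      _ < m ^ 2 * n ^ 2 := Nat.mul_lt_mul'' hl hr
  exact this.ne (mul_pow m n 2)

theorem stmt6_general (m n r : ℕ) (hm : 0 < m) (hn : 0 < n)
    (f : Sym2 (Fin m ⊕ Fin n) → Fin r) :
    ∃ (i : Fin r) (K : (bipColor m n r f i).ConnectedComponent),
      ((m : ℝ) + n) / r ≤ (K.supp.ncard : ℝ) := by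
  have : NeZero m := ⟨hm.ne'⟩
  have : NeZero n := ⟨hn.ne'⟩
  have hr : (0 : ℝ) < r := by exact_mod_cast (f s(.inl 0, .inr 0)).pos
  obtain ⟨i, K, hK⟩ := exists_card_add_card_le_card_mul_ncard_supp (G := bipColor m n r f)
    fun a b => ⟨f s(.inl a, .inr b), by simp, rfl⟩
  refine ⟨i, K, (div_le_iff₀' hr).2 ?_⟩
  simpa using (Nat.cast_le (α := ℝ)).2 hK

theorem stmt6 (m n r : ℕ) (hm : 0 < m) (hn : 0 < n) (hr : 0 < r)
    (f : Sym2 (Fin m ⊕ Fin n) → Fin r) :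
    ∃ (i : Fin r) (K : (bipColor m n r f i).ConnectedComponent),
      ((m : ℝ) + n) / r ≤ (K.supp.ncard : ℝ) :=
  stmt6_general m n r hm hn f
end

section
/- For all positive integers n and r with r ≥ 2, in any r-colouring of the edges of K_n there is a monochromatic connected subgraph on at least n/(r-1) vertices; that is, m(n,r,1,1) ≥ n/(r-1). -/
open Finset

/-!
Fix a colour `i₀`. If its graph is connected it is a monochromatic component on all `n`
vertices; otherwise let `D` be one of its components. Every one of the `|D| |Dᶜ|` pairs across the cut has one of the other `r - 1`
colours. If all monochromatic components have at most `M` vertices, a component of colour `i`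
meeting `D` in `a` and `Dᶜ` in `b` vertices joins `ab ≤ M ab / (a + b)` cross pairs, and since
`(a, b) ↦ ab / (a + b)` is superadditive (Milne's inequality) colour `i` joins at most
`M |D| |Dᶜ| / n` of them. Summing over the colours, `|D| |Dᶜ| ≤ (r - 1) M |D| |Dᶜ| / n`.
-/

theorem mul_div_add_add_mul_div_add_le {x y u v : ℝ} (hx : 0 ≤ x) (hy : 0 ≤ y) (hu : 0 ≤ u)
    (hv : 0 ≤ v) : x * y / (x + y) + u * v / (u + v) ≤ (x + u) * (y + v) / (x + u + (y + v)) := by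
  rcases (add_nonneg hx hy).eq_or_lt with hxy | hxy
  · obtain ⟨rfl, rfl⟩ : x = 0 ∧ y = 0 := ⟨by linarith, by linarith⟩
    simp
  rcases (add_nonneg hu hv).eq_or_lt with huv | huv
  · obtain ⟨rfl, rfl⟩ : u = 0 ∧ v = 0 := ⟨by linarith, by linarith⟩
    simp
  rw [div_add_div _ _ hxy.ne' huv.ne', div_le_div_iff₀ (by positivity) (by linarith)]
  nlinarith [sq_nonneg (x * v - y * u), mul_nonneg hx hv, mul_nonneg hy hu]

theorem Finset.sum_mul_div_add_le {ι : Type*} (s : Finset ι) {a b : ι → ℝ}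
    (ha : ∀ i ∈ s, 0 ≤ a i) (hb : ∀ i ∈ s, 0 ≤ b i) :
    ∑ i ∈ s, a i * b i / (a i + b i) ≤
      (∑ i ∈ s, a i) * (∑ i ∈ s, b i) / (∑ i ∈ s, a i + ∑ i ∈ s, b i) := by
  classical
  induction s using Finset.induction_on with
  | empty => simp
  | insert i s his ih =>
    simp only [forall_mem_insert] at ha hb
    simp only [sum_insert his]
    exact (add_le_add le_rfl (ih ha.2 hb.2)).trans <| mul_div_add_add_mul_div_add_le
      ha.1 hb.1 (sum_nonneg ha.2) (sum_nonneg hb.2)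

theorem Finset.sum_mul_le_of_add_le {ι : Type*} (s : Finset ι) {a b : ι → ℝ} {M : ℝ}
    (hM : 0 ≤ M) (ha : ∀ i ∈ s, 0 ≤ a i) (hb : ∀ i ∈ s, 0 ≤ b i)
    (hab : ∀ i ∈ s, a i + b i ≤ M) :
    ∑ i ∈ s, a i * b i ≤
      M * ((∑ i ∈ s, a i) * (∑ i ∈ s, b i) / (∑ i ∈ s, a i + ∑ i ∈ s, b i)) := by
  have hterm : ∀ i ∈ s, a i * b i ≤ M * (a i * b i / (a i + b i)) := by
    intro i hi
    rcases (add_nonneg (ha i hi) (hb i hi)).eq_or_lt with h | h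
    · have ha0 : a i = 0 := by linarith [ha i hi, hb i hi]
      simp [ha0]
    · rw [mul_div_assoc', le_div_iff₀ h]
      nlinarith [mul_nonneg (ha i hi) (hb i hi), hab i hi]
  calc ∑ i ∈ s, a i * b i ≤ ∑ i ∈ s, M * (a i * b i / (a i + b i)) := sum_le_sum hterm
    _ = M * ∑ i ∈ s, a i * b i / (a i + b i) := (mul_sum _ _ _).symm
    _ ≤ _ := mul_le_mul_of_nonneg_left (s.sum_mul_div_add_le ha hb) hM

theorem Finset.card_filter_product_apply_eq {V κ : Type*} [DecidableEq κ] (φ : V → κ)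
    (s t : Finset V) {u : Finset κ} (hu : ∀ x ∈ s, φ x ∈ u) :
    #{p ∈ s ×ˢ t | φ p.1 = φ p.2} = ∑ k ∈ u, #{x ∈ s | φ x = k} * #{y ∈ t | φ y = k} := by
  rw [card_eq_sum_card_fiberwise (f := fun p => φ p.1) (t := u)
    (fun p hp => hu _ (mem_filter.1 hp |>.1 |> mem_product.1 |>.1))]
  refine sum_congr rfl fun k _ => ?_
  rw [← card_product]
  congr 1
  ext ⟨x, y⟩
  simp only [mem_filter, mem_product]
  constructor
  · rintro ⟨⟨⟨hx, hy⟩, hxy⟩, rfl⟩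
    exact ⟨⟨hx, rfl⟩, hy, hxy.symm⟩
  · rintro ⟨⟨hx, rfl⟩, hy, hyx⟩
    exact ⟨⟨⟨hx, hy⟩, hyx.symm⟩, rfl⟩

theorem Finset.card_filter_product_apply_eq_le {V κ : Type*} [Fintype V] [DecidableEq V]
    [DecidableEq κ] (φ : V → κ) {M : ℕ} (hM : ∀ x, #{y | φ y = φ x} ≤ M) {s t : Finset V}
    (hst : Disjoint s t) :
    (#{p ∈ s ×ˢ t | φ p.1 = φ p.2} : ℝ) ≤ M * (#s * #t / (#s + #t)) := by
  set u := univ.image φ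
  have hu : ∀ x, φ x ∈ u := fun x => mem_image_of_mem φ (mem_univ x)
  have hsum : ∀ w : Finset V, (∑ k ∈ u, #{x ∈ w | φ x = k} : ℝ) = #w := fun w => by
    exact_mod_cast (card_eq_sum_card_fiberwise fun x _ => hu x).symm
  have hfiber : ∀ k ∈ u, (#{x ∈ s | φ x = k} : ℝ) + #{y ∈ t | φ y = k} ≤ M := by
    simp only [u, mem_image, mem_univ, true_and]
    rintro _ ⟨x, rfl⟩
    rw [← Nat.cast_add, ← card_union_of_disjoint (disjoint_filter_filter hst), ← filter_union]
    exact_mod_cast (card_le_card (filter_subset_filter _ (subset_univ _))).trans (hM x)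
  rw [card_filter_product_apply_eq φ s t fun x _ => hu x, ← hsum s, ← hsum t]
  push_cast
  exact u.sum_mul_le_of_add_le M.cast_nonneg (fun _ _ => Nat.cast_nonneg _)
    (fun _ _ => Nat.cast_nonneg _) hfiber

namespace SimpleGraph

theorem ncard_supp_connectedComponentMk {V : Type*} [Fintype V] (H : SimpleGraph V)
    [DecidableEq H.ConnectedComponent] (x : V) : (H.connectedComponentMk x).supp.ncard =
      #{y | H.connectedComponentMk y = H.connectedComponentMk x} := by
  rw [← Set.ncard_coe_finset]
  congr 1
  ext y
  simp [eq_comm]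

variable {V ι : Type*} [Fintype V] [DecidableEq V] [Fintype ι] (G : ι → SimpleGraph V)

theorem card_mul_card_compl_le_sum_of_cover [DecidableEq ι]
    [∀ i, DecidableEq ((G i).ConnectedComponent)] (hcover : ∀ x y, x ≠ y → ∃ i, (G i).Adj x y)
    {i₀ : ι} {D : Finset V} (hD : ∀ x ∈ D, ∀ y ∉ D, ¬ (G i₀).Adj x y) :
    #D * #Dᶜ ≤ ∑ i ∈ univ.erase i₀,
      #{p ∈ D ×ˢ Dᶜ | (G i).connectedComponentMk p.1 = (G i).connectedComponentMk p.2} := by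
  rw [← card_product]
  refine (card_le_card fun p hp => ?_).trans (card_biUnion_le (M := V × V))
  obtain ⟨hx, hy⟩ := mem_product.1 hp
  rw [mem_compl] at hy
  obtain ⟨i, hi⟩ := hcover p.1 p.2 fun h => hy (h ▸ hx)
  have hii₀ : i ≠ i₀ := by
    rintro rfl
    exact hD _ hx _ hy hi
  exact mem_biUnion.2 ⟨i, mem_erase.2 ⟨hii₀, mem_univ i⟩,
    mem_filter.2 ⟨hp, ConnectedComponent.eq.2 hi.reachable⟩⟩

theorem card_le_mul_of_cover_of_cut (hcover : ∀ x y, x ≠ y → ∃ i, (G i).Adj x y)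
    {M : ℕ} (hM : ∀ i v, ((G i).connectedComponentMk v).supp.ncard ≤ M) {i₀ : ι} {D : Finset V}
    (hD : ∀ x ∈ D, ∀ y ∉ D, ¬ (G i₀).Adj x y) (hD₀ : D.Nonempty) (hD₁ : Dᶜ.Nonempty) :
    Fintype.card V ≤ (Fintype.card ι - 1) * M := by
  classical
  have hpos : (0 : ℝ) < #D * #Dᶜ := by exact_mod_cast Nat.mul_pos hD₀.card_pos hD₁.card_pos
  have hV : (0 : ℝ) < Fintype.card V := by exact_mod_cast Fintype.card_pos_iff.2 ⟨hD₀.choose⟩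
  have hcard : (#D + #Dᶜ : ℝ) = Fintype.card V := by exact_mod_cast card_add_card_compl D
  have hcount : (#D * #Dᶜ : ℝ) ≤ (Fintype.card ι - 1 : ℕ) * (M * (#D * #Dᶜ / Fintype.card V)) := by
    calc (#D * #Dᶜ : ℝ)
        ≤ ∑ i ∈ univ.erase i₀,
          (#{p ∈ D ×ˢ Dᶜ | (G i).connectedComponentMk p.1 = (G i).connectedComponentMk p.2} : ℝ) :=
          by exact_mod_cast card_mul_card_compl_le_sum_of_cover G hcover hD
      _ ≤ ∑ i ∈ univ.erase i₀, (M * (#D * #Dᶜ / Fintype.card V) : ℝ) := by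
          refine sum_le_sum fun i _ => ?_
          rw [← hcard]
          exact card_filter_product_apply_eq_le (G i).connectedComponentMk
            (fun x => ncard_supp_connectedComponentMk (G i) x ▸ hM i x) disjoint_compl_right
      _ = _ := by rw [sum_const, card_erase_of_mem (mem_univ _), card_univ, nsmul_eq_mul]
  rw [mul_div_assoc', mul_div_assoc', le_div_iff₀ hV] at hcount
  have : (Fintype.card V : ℝ) ≤ (Fintype.card ι - 1 : ℕ) * M := by nlinarith
  exact_mod_cast this

theorem card_le_mul_of_cover (hι : 1 < Fintype.card ι)
    (hcover : ∀ x y, x ≠ y → ∃ i, (G i).Adj x y) {M : ℕ}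
    (hM : ∀ i v, ((G i).connectedComponentMk v).supp.ncard ≤ M) :
    Fintype.card V ≤ (Fintype.card ι - 1) * M := by
  classical
  obtain ⟨i₀⟩ : Nonempty ι := Fintype.card_pos_iff.1 (by omega)
  by_cases hconn : (G i₀).Preconnected
  · rcases isEmpty_or_nonempty V with hV | ⟨⟨x⟩⟩
    · simp
    calc Fintype.card V
        = #{y | (G i₀).connectedComponentMk y = (G i₀).connectedComponentMk x} := by
          rw [filter_true_of_mem fun y _ => ConnectedComponent.eq.2 (hconn y x), card_univ]
      _ ≤ M := ncard_supp_connectedComponentMk (G i₀) x ▸ hM i₀ x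
      _ ≤ (Fintype.card ι - 1) * M := Nat.le_mul_of_pos_left M (by omega)
  obtain ⟨v, w, hvw⟩ : ∃ v w, ¬ (G i₀).Reachable v w := by
    simpa [Preconnected] using hconn
  refine card_le_mul_of_cover_of_cut G hcover hM (i₀ := i₀) (D := {x | (G i₀).Reachable v x})
    ?_ ⟨v, by simp⟩ ⟨w, by simpa using hvw⟩
  simp only [mem_filter, mem_univ, true_and]
  exact fun x hx y hy hxy => hy (hx.trans hxy.reachable)

end SimpleGraph

theorem stmt7 (n r : ℕ) (hn : 1 ≤ n) (hr : 2 ≤ r)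
    (f : Sym2 (Fin n) → Fin r) :
    ∃ (i : Fin r) (A : Set (Fin n)),
      ((colorGraph n r f i).induce A).Connected ∧
      (n : ℝ) / ((r : ℝ) - 1) ≤ (A.ncard : ℝ) := by
  obtain ⟨⟨i, v⟩, -, hmax⟩ := exists_max_image univ
    (fun p : Fin r × Fin n => ((colorGraph n r f p.1).connectedComponentMk p.2).supp.ncard)
    ⟨(⟨0, by omega⟩, ⟨0, hn⟩), mem_univ _⟩
  have hbound := SimpleGraph.card_le_mul_of_cover (colorGraph n r f)
    (by rw [Fintype.card_fin]; omega) (fun x y hxy => ⟨f s(x, y), hxy, rfl⟩)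
    (fun j w => hmax (j, w) (mem_univ _))
  simp only [Fintype.card_fin] at hbound
  set C := (colorGraph n r f i).connectedComponentMk v
  refine ⟨i, C.supp, C.maximal_connected_induce_supp.1, ?_⟩
  have hr' : (1 : ℝ) < r := by exact_mod_cast hr
  rw [div_le_iff₀ (by linarith)]
  have : (n : ℝ) ≤ ((r - 1 : ℕ) : ℝ) * C.supp.ncard := by exact_mod_cast hbound
  rw [Nat.cast_sub (by omega), Nat.cast_one] at this
  linarith
end

section
/- Let q, ℓ, m, n be natural numbers with m, n ≥ ℓ and m + n ≥ 2ℓ + 1. If G is a bipartite graph with parts of sizes m and n containing no (ℓ+1)-connected subgraph on at least q vertices, then e(G) ≤ q(n-ℓ)(m-ℓ)/(m+n-2ℓ) + (ℓ² + ℓ)(m + n - 2ℓ). -/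
noncomputable def edgeBound (q c x y : ℝ) : ℝ := q * (x * y / (x + y)) + c * (x + y)

lemma edgeBound_comm (q c x y : ℝ) : edgeBound q c x y = edgeBound q c y x := by
  unfold edgeBound; ring

lemma mul_div_add_le_mul_div_add {x y X Y : ℝ} (hx : 0 ≤ x) (hy : 0 < y) (hxX : x ≤ X)
    (hyY : y ≤ Y) : x * y / (x + y) ≤ X * Y / (X + Y) := by
  rw [div_le_div_iff₀ (by positivity) (by linarith)]
  nlinarith [mul_nonneg (mul_nonneg hx (hx.trans hxX)) (sub_nonneg.2 hyY),
    mul_nonneg (mul_nonneg hy.le (hy.le.trans hyY)) (sub_nonneg.2 hxX)]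

lemma mul_div_add_add_mul_div_add_le_s8 {x₁ y₁ x₂ y₂ : ℝ} (hx₁ : 0 < x₁) (hy₁ : 0 < y₁)
    (hx₂ : 0 < x₂) (hy₂ : 0 < y₂) :
    x₁ * y₁ / (x₁ + y₁) + x₂ * y₂ / (x₂ + y₂) ≤
      (x₁ + x₂) * (y₁ + y₂) / (x₁ + x₂ + (y₁ + y₂)) := by
  rw [div_add_div _ _ (by positivity) (by positivity),
    div_le_div_iff₀ (by positivity) (by positivity)]
  nlinarith [sq_nonneg (x₁ * y₂ - x₂ * y₁), mul_pos hx₁ hy₁, mul_pos hx₂ hy₂,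
    mul_pos (mul_pos hx₁ hy₁) (mul_pos hx₂ hy₂)]

lemma edgeBound_add_le {q c x₁ y₁ x₂ y₂ X Y : ℝ} (hq : 0 ≤ q) (hc : 0 ≤ c)
    (hx₁ : 0 < x₁) (hy₁ : 0 < y₁) (hx₂ : 0 < x₂) (hy₂ : 0 < y₂)
    (hX : x₁ + x₂ ≤ X) (hY : y₁ + y₂ ≤ Y) :
    edgeBound q c x₁ y₁ + edgeBound q c x₂ y₂ ≤ edgeBound q c X Y := by
  have hP := (mul_div_add_add_mul_div_add_le_s8 hx₁ hy₁ hx₂ hy₂).trans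
    (mul_div_add_le_mul_div_add (by positivity) (by positivity) hX hY)
  unfold edgeBound
  nlinarith [mul_le_mul_of_nonneg_left hP hq]

lemma edgeBound_sub_one_add_le {q c x y : ℝ} (hq : 0 ≤ q) (hx : 1 ≤ x) (hy : 0 < y) :
    edgeBound q c (x - 1) y + c ≤ edgeBound q c x y := by
  have hP := mul_div_add_le_mul_div_add (sub_nonneg.2 hx) hy (sub_le_self x zero_le_one) le_rfl
  unfold edgeBound
  nlinarith [mul_le_mul_of_nonneg_left hP hq]

lemma mul_le_edgeBound {q ℓ a b : ℝ} (hℓ : 0 ≤ ℓ) (ha : ℓ ≤ a) (hb : ℓ ≤ b)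
    (hab : 2 * ℓ + 1 ≤ a + b) (hq : a + b ≤ q) :
    a * b ≤ edgeBound q (ℓ ^ 2 + ℓ) (a - ℓ) (b - ℓ) := by
  unfold edgeBound
  set s := a - ℓ + (b - ℓ)
  set P := (a - ℓ) * (b - ℓ) / s
  have hs : 0 < s := by linarith
  have hP : 0 ≤ P := div_nonneg (mul_nonneg (by linarith) (by linarith)) hs.le
  have hsP : (a - ℓ) * (b - ℓ) = s * P := (mul_div_cancel₀ _ hs.ne').symm
  nlinarith [mul_le_mul_of_nonneg_right hq hP, mul_nonneg hℓ hP,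
    mul_nonneg (mul_nonneg hℓ hℓ) (by linarith : (0 : ℝ) ≤ s - 1)]

lemma mul_le_edgeBound_zero {q ℓ b : ℝ} (hℓ : 0 ≤ ℓ) (hb : ℓ + 1 ≤ b) :
    ℓ * b ≤ edgeBound q (ℓ ^ 2 + ℓ) 0 (b - ℓ) := by
  simp only [edgeBound, zero_mul, zero_div, mul_zero, zero_add]
  nlinarith [mul_nonneg (mul_nonneg hℓ hℓ) (by linarith : (0 : ℝ) ≤ b - ℓ - 1)]

open Set

lemma Set.ncard_inter_add_ncard_inter_of_union_eq_univ {V : Type*} [Finite V] {M N : Set V}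
    (hd : Disjoint M N) (hMN : M ∪ N = univ) (A : Set V) :
    (M ∩ A).ncard + (N ∩ A).ncard = A.ncard := by
  rw [← ncard_union_eq (hd.mono inter_subset_left inter_subset_left), ← union_inter_distrib_right,
    hMN, univ_inter]

namespace SimpleGraph

variable {V : Type*} {G : SimpleGraph V}

lemma Connected.induce_induce_compl {A : Set V} {S : Set A}
    (h : (G.induce (A \ Subtype.val '' S)).Connected) : ((G.induce A).induce Sᶜ).Connected := by
  let f : G.induce (A \ Subtype.val '' S) →g (G.induce A).induce Sᶜ :=
    { toFun := fun x ↦ ⟨⟨x, x.2.1⟩, fun hx ↦ x.2.2 ⟨_, hx, rfl⟩⟩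
      map_rel' := id }
  refine h.map f ?_
  rintro ⟨⟨v, hvA⟩, hvS⟩
  refine ⟨⟨v, hvA, ?_⟩, rfl⟩
  rintro ⟨w, hwS, rfl⟩
  exact hvS hwS

lemma exists_separation_of_not_preconnected_induce {W : Set V}
    (h : ¬(G.induce W).Preconnected) :
    ∃ C ⊆ W, C.Nonempty ∧ (W \ C).Nonempty ∧ ∀ x ∈ C, ∀ y ∈ W \ C, ¬G.Adj x y := by
  simp only [Preconnected, not_forall] at h
  obtain ⟨u, w, huw⟩ := h
  refine ⟨{x | ∃ hx : x ∈ W, (G.induce W).Reachable u ⟨x, hx⟩}, fun x hx ↦ hx.1,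
    ⟨u, u.2, .rfl⟩, ⟨w, w.2, fun ⟨_, hw⟩ ↦ huw hw⟩, ?_⟩
  rintro x ⟨hx, hux⟩ y ⟨hy, hyC⟩ hxy
  exact hyC ⟨hy, hux.trans (Adj.reachable (G := G.induce W) (u := ⟨x, hx⟩) (v := ⟨y, hy⟩) hxy)⟩

lemma exists_separation_of_not_isKConnected [Finite V] {k : ℕ} {A : Set V}
    (hk : k < A.ncard) (h : ¬IsKConnected k (G.induce A)) :
    ∃ B₁ B₂ : Set V, B₁ ∪ B₂ = A ∧ (B₁ ∩ B₂).ncard < k ∧ (B₁ \ B₂).Nonempty ∧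
      (B₂ \ B₁).Nonempty ∧ ∀ x ∈ B₁ \ B₂, ∀ y ∈ B₂ \ B₁, ¬G.Adj x y := by
  simp only [IsKConnected, Nat.card_coe_set_eq, hk, true_and, not_forall] at h
  obtain ⟨S, hSk, hS⟩ := h
  set S' := Subtype.val '' S
  have hS'A : S' ⊆ A := by rintro _ ⟨x, -, rfl⟩; exact x.2
  have hS'k : S'.ncard < k := by
    rwa [ncard_image_of_injective _ Subtype.val_injective]
  obtain ⟨v, hvA, hvS'⟩ := exists_mem_notMem_of_ncard_lt_ncard (hS'k.trans hk)
  have hpre : ¬(G.induce (A \ S')).Preconnected := fun hpre ↦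
    hS ((connected_iff _).2 ⟨hpre, ⟨⟨v, hvA, hvS'⟩⟩⟩).induce_induce_compl
  obtain ⟨C, hCW, hC, hWC, hsep⟩ := exists_separation_of_not_preconnected_induce hpre
  have h₁ : (C ∪ S') \ (((A \ S') \ C) ∪ S') = C := by
    ext x; have := @hCW x; grind
  have h₂ : (((A \ S') \ C) ∪ S') \ (C ∪ S') = (A \ S') \ C := by
    ext x; grind
  refine ⟨C ∪ S', ((A \ S') \ C) ∪ S', ?_, ?_, by rwa [h₁], by rwa [h₂], by rwa [h₁, h₂]⟩
  · ext x; have := @hCW x; have := @hS'A x; grind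
  · refine lt_of_le_of_lt (ncard_le_ncard fun x ↦ ?_) hS'k
    have := @hCW x; grind

lemma IsBipartiteWith.ncard_edgeSet_inter_sym2_le [Finite V] {M N : Set V}
    (hG : G.IsBipartiteWith M N) (A : Set V) :
    (G.edgeSet ∩ A.sym2).ncard ≤ (M ∩ A).ncard * (N ∩ A).ncard := by
  set P := (M ∩ A) ×ˢ (N ∩ A)
  have hsub : G.edgeSet ∩ A.sym2 ⊆ Sym2.mk.uncurry '' P := by
    rintro ⟨x, y⟩ ⟨hxy, hx, hy⟩
    rcases hG.mem_of_adj hxy with ⟨hxM, hyN⟩ | ⟨hxN, hyM⟩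
    · exact ⟨(x, y), ⟨⟨hxM, hx⟩, hyN, hy⟩, rfl⟩
    · exact ⟨(y, x), ⟨⟨hyM, hy⟩, hxN, hx⟩, Sym2.eq_swap⟩
  calc (G.edgeSet ∩ A.sym2).ncard ≤ (Sym2.mk.uncurry '' P).ncard := ncard_le_ncard hsub
    _ ≤ P.ncard := ncard_image_le
    _ = (M ∩ A).ncard * (N ∩ A).ncard := ncard_prod

lemma ncard_edgeSet_inter_sym2_le_sdiff_singleton [Finite V] (A : Set V) (v : V) :
    (G.edgeSet ∩ A.sym2).ncard ≤
      (G.edgeSet ∩ (A \ {v}).sym2).ncard + (G.neighborSet v ∩ A).ncard := by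
  have hsub : G.edgeSet ∩ A.sym2 ⊆
      (G.edgeSet ∩ (A \ {v}).sym2) ∪ (fun w ↦ s(v, w)) '' (G.neighborSet v ∩ A) := by
    rintro ⟨x, y⟩ ⟨hxy, hx, hy⟩
    by_cases hxv : x = v
    · subst hxv; exact Or.inr ⟨y, ⟨hxy, hy⟩, rfl⟩
    by_cases hyv : y = v
    · subst hyv; exact Or.inr ⟨x, ⟨hxy.symm, hx⟩, Sym2.eq_swap⟩
    exact Or.inl ⟨hxy, ⟨hx, hxv⟩, hy, hyv⟩
  exact (ncard_le_ncard hsub).trans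
    ((ncard_union_le _ _).trans (Nat.add_le_add_left ncard_image_le _))

lemma ncard_edgeSet_inter_sym2_le_add [Finite V] {A B₁ B₂ : Set V} (hA : B₁ ∪ B₂ = A)
    (hsep : ∀ x ∈ B₁ \ B₂, ∀ y ∈ B₂ \ B₁, ¬G.Adj x y) :
    (G.edgeSet ∩ A.sym2).ncard ≤ (G.edgeSet ∩ B₁.sym2).ncard + (G.edgeSet ∩ B₂.sym2).ncard := by
  have hsub : G.edgeSet ∩ A.sym2 ⊆ (G.edgeSet ∩ B₁.sym2) ∪ (G.edgeSet ∩ B₂.sym2) := by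
    subst hA
    rintro ⟨x, y⟩ ⟨hxy, hx, hy⟩
    grind [mem_edgeSet, mk_mem_sym2_iff, Adj.symm]
  exact (ncard_le_ncard hsub).trans (ncard_union_le _ _)

namespace IsBipartiteWith

variable {M N A B₁ B₂ : Set V}

lemma neighborSet_inter_subset_of_separation (hG : G.IsBipartiteWith M N) (hA : B₁ ∪ B₂ = A)
    (hsep : ∀ x ∈ B₁ \ B₂, ∀ y ∈ B₂ \ B₁, ¬G.Adj x y) {x : V} (hxM : x ∈ M) (hx : x ∈ B₁ \ B₂) :
    G.neighborSet x ∩ A ⊆ N ∩ B₁ := by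
  rintro y ⟨hxy, hyA⟩
  refine ⟨hG.mem_of_mem_adj hxM hxy, ?_⟩
  by_contra hyB₁
  rw [← hA] at hyA
  exact hsep x hx y ⟨hyA.resolve_left hyB₁, hyB₁⟩ hxy

lemma le_ncard_inter_of_separation [Finite V] {d : ℕ} (hG : G.IsBipartiteWith M N)
    (hMN : M ∪ N = univ) (hA : B₁ ∪ B₂ = A) (hsep : ∀ x ∈ B₁ \ B₂, ∀ y ∈ B₂ \ B₁, ¬G.Adj x y)
    (hne : (B₁ \ B₂).Nonempty) (hdeg : ∀ v ∈ A, d ≤ (G.neighborSet v ∩ A).ncard)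
    (hd : (B₁ ∩ B₂).ncard < d) : d ≤ (M ∩ B₁).ncard ∧ d ≤ (N ∩ B₁).ncard := by
  have key : ∀ {M N : Set V}, G.IsBipartiteWith M N → ∀ x ∈ M, x ∈ B₁ \ B₂ →
      d ≤ (N ∩ B₁).ncard ∧ d ≤ (M ∩ B₁).ncard := by
    intro M N hG x hxM hx
    have hN : d ≤ (N ∩ B₁).ncard := (hdeg x (hA ▸ Or.inl hx.1)).trans
      (ncard_le_ncard (hG.neighborSet_inter_subset_of_separation hA hsep hxM hx))
    obtain ⟨y, ⟨hyN, hyB₁⟩, hyB⟩ := exists_mem_notMem_of_ncard_lt_ncard (hd.trans_le hN)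
    refine ⟨hN, (hdeg y (hA ▸ Or.inl hyB₁)).trans (ncard_le_ncard ?_)⟩
    exact hG.symm.neighborSet_inter_subset_of_separation hA hsep hyN ⟨hyB₁, fun h ↦ hyB ⟨hyB₁, h⟩⟩
  obtain ⟨x, hx⟩ := hne
  rcases (hMN ▸ mem_univ x : x ∈ M ∪ N) with hxM | hxN
  · exact (key hG x hxM hx).symm
  · exact key hG.symm x hxN hx

end IsBipartiteWith

end SimpleGraph

section EdgeBoundOn

variable {V : Type*} (q ℓ : ℕ) {M N A B₁ B₂ : Set V}

noncomputable def edgeBoundOn (M N A : Set V) : ℝ :=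
  edgeBound q ((ℓ : ℝ) ^ 2 + ℓ) ((M ∩ A).ncard - ℓ) ((N ∩ A).ncard - ℓ)

lemma edgeBoundOn_comm : edgeBoundOn q ℓ M N A = edgeBoundOn q ℓ N M A :=
  edgeBound_comm ..

lemma edgeBoundOn_sdiff_singleton_add_le [Finite V] (hd : Disjoint M N) (hMN : M ∪ N = univ)
    {v : V} (hv : v ∈ A) (ha : ℓ + 1 ≤ (M ∩ A).ncard) (hb : ℓ + 1 ≤ (N ∩ A).ncard) :
    edgeBoundOn q ℓ M N (A \ {v}) + ((ℓ : ℝ) ^ 2 + ℓ) ≤ edgeBoundOn q ℓ M N A := by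
  have key : ∀ {M N : Set V}, Disjoint M N → v ∈ M → ℓ + 1 ≤ (M ∩ A).ncard →
      ℓ + 1 ≤ (N ∩ A).ncard →
      edgeBoundOn q ℓ M N (A \ {v}) + ((ℓ : ℝ) ^ 2 + ℓ) ≤ edgeBoundOn q ℓ M N A := by
    intro M N hd hvM ha hb
    have hvN : v ∉ N ∩ A := fun h ↦ disjoint_left.mp hd hvM h.1
    rw [edgeBoundOn, ← inter_sdiff_assoc, ← inter_sdiff_assoc, sdiff_singleton_eq_self hvN,
      ncard_sdiff_singleton_of_mem (show v ∈ M ∩ A from ⟨hvM, hv⟩), Nat.cast_sub (by omega),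
      Nat.cast_one, sub_right_comm]
    exact edgeBound_sub_one_add_le (Nat.cast_nonneg q)
      (by rw [le_sub_iff_add_le']; exact_mod_cast ha)
      (by rw [sub_pos]; exact_mod_cast hb)
  rcases (hMN ▸ mem_univ v : v ∈ M ∪ N) with hvM | hvN
  · exact key hd hvM ha hb
  · rw [edgeBoundOn_comm, edgeBoundOn_comm (M := M)]
    exact key hd.symm hvN hb ha

lemma edgeBoundOn_add_le_of_separation [Finite V] (hA : B₁ ∪ B₂ = A)
    (hS : (B₁ ∩ B₂).ncard ≤ ℓ)
    (h₁M : ℓ + 1 ≤ (M ∩ B₁).ncard) (h₁N : ℓ + 1 ≤ (N ∩ B₁).ncard)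
    (h₂M : ℓ + 1 ≤ (M ∩ B₂).ncard) (h₂N : ℓ + 1 ≤ (N ∩ B₂).ncard) :
    edgeBoundOn q ℓ M N B₁ + edgeBoundOn q ℓ M N B₂ ≤ edgeBoundOn q ℓ M N A := by
  have hside : ∀ P : Set V, (P ∩ B₁).ncard + (P ∩ B₂).ncard ≤ (P ∩ A).ncard + ℓ := by
    intro P
    rw [← ncard_union_add_ncard_inter, ← inter_union_distrib_left, hA]
    gcongr
    exact (ncard_le_ncard (inter_subset_inter inter_subset_right inter_subset_right)).trans hS
  have hM : ((M ∩ B₁).ncard + (M ∩ B₂).ncard : ℝ) ≤ (M ∩ A).ncard + ℓ := by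
    exact_mod_cast hside M
  have hN : ((N ∩ B₁).ncard + (N ∩ B₂).ncard : ℝ) ≤ (N ∩ A).ncard + ℓ := by
    exact_mod_cast hside N
  have hpos : ∀ {s : ℕ}, ℓ + 1 ≤ s → (0 : ℝ) < s - ℓ := fun h ↦ by
    rw [sub_pos]; exact_mod_cast h
  exact edgeBound_add_le (Nat.cast_nonneg q) (by positivity) (hpos h₁M) (hpos h₁N) (hpos h₂M)
    (hpos h₂N) (by linarith) (by linarith)

end EdgeBoundOn

namespace SimpleGraph.IsBipartiteWith

variable {V : Type*} [Finite V] {G : SimpleGraph V} {q ℓ : ℕ} {M N A : Set V}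

lemma ncard_edgeSet_inter_sym2_le_edgeBoundOn_of_ncard_eq (hG : G.IsBipartiteWith M N)
    (ha : (M ∩ A).ncard = ℓ) (hb : ℓ + 1 ≤ (N ∩ A).ncard) :
    ((G.edgeSet ∩ A.sym2).ncard : ℝ) ≤ edgeBoundOn q ℓ M N A := by
  have he : ((G.edgeSet ∩ A.sym2).ncard : ℝ) ≤ ℓ * (N ∩ A).ncard := by
    rw [← ha]; exact_mod_cast hG.ncard_edgeSet_inter_sym2_le A
  rw [edgeBoundOn, ha, sub_self]
  exact he.trans (mul_le_edgeBound_zero (Nat.cast_nonneg ℓ) (by exact_mod_cast hb))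

lemma ncard_edgeSet_inter_sym2_le_edgeBoundOn_of_ncard_le (hG : G.IsBipartiteWith M N)
    (hMN : M ∪ N = univ) (ha : ℓ ≤ (M ∩ A).ncard) (hb : ℓ ≤ (N ∩ A).ncard)
    (hab : 2 * ℓ + 1 ≤ (M ∩ A).ncard + (N ∩ A).ncard) (hq : A.ncard ≤ q) :
    ((G.edgeSet ∩ A.sym2).ncard : ℝ) ≤ edgeBoundOn q ℓ M N A := by
  rw [← ncard_inter_add_ncard_inter_of_union_eq_univ hG.disjoint hMN A] at hq
  calc ((G.edgeSet ∩ A.sym2).ncard : ℝ) ≤ (M ∩ A).ncard * (N ∩ A).ncard := by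
        exact_mod_cast hG.ncard_edgeSet_inter_sym2_le A
    _ ≤ edgeBoundOn q ℓ M N A :=
        mul_le_edgeBound (Nat.cast_nonneg ℓ) (by exact_mod_cast ha) (by exact_mod_cast hb)
          (by exact_mod_cast hab) (by exact_mod_cast hq)

lemma le_ncard_neighborSet_inter_of_edgeBoundOn_lt (hG : G.IsBipartiteWith M N)
    (hMN : M ∪ N = univ) {v : V} (hv : v ∈ A) (ha : ℓ + 1 ≤ (M ∩ A).ncard)
    (hb : ℓ + 1 ≤ (N ∩ A).ncard)
    (hA : edgeBoundOn q ℓ M N A < (G.edgeSet ∩ A.sym2).ncard)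
    (hA' : (G.edgeSet ∩ (A \ {v}).sym2).ncard ≤ edgeBoundOn q ℓ M N (A \ {v})) :
    ℓ + 1 ≤ (G.neighborSet v ∩ A).ncard := by
  have hdel : ((G.edgeSet ∩ A.sym2).ncard : ℝ) ≤
      (G.edgeSet ∩ (A \ {v}).sym2).ncard + (G.neighborSet v ∩ A).ncard := by
    exact_mod_cast G.ncard_edgeSet_inter_sym2_le_sdiff_singleton A v
  have hF := edgeBoundOn_sdiff_singleton_add_le q ℓ hG.disjoint hMN hv ha hb
  have : (ℓ : ℝ) < (G.neighborSet v ∩ A).ncard := by nlinarith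
  exact_mod_cast this

theorem ncard_edgeSet_inter_sym2_le_edgeBoundOn (hG : G.IsBipartiteWith M N)
    (hMN : M ∪ N = univ) (hno : ∀ A : Set V, IsKConnected (ℓ + 1) (G.induce A) → A.ncard < q)
    (A : Set V) (ha : ℓ ≤ (M ∩ A).ncard) (hb : ℓ ≤ (N ∩ A).ncard)
    (hab : 2 * ℓ + 1 ≤ (M ∩ A).ncard + (N ∩ A).ncard) :
    ((G.edgeSet ∩ A.sym2).ncard : ℝ) ≤ edgeBoundOn q ℓ M N A := by
  induction hk : A.ncard using Nat.strong_induction_on generalizing A with | _ k IH =>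
  have hcard := ncard_inter_add_ncard_inter_of_union_eq_univ hG.disjoint hMN
  have hAk : (M ∩ A).ncard + (N ∩ A).ncard = k := hk ▸ hcard A
  rcases ha.eq_or_lt with ha | ha
  · exact hG.ncard_edgeSet_inter_sym2_le_edgeBoundOn_of_ncard_eq ha.symm (by omega)
  rcases hb.eq_or_lt with hb | hb
  · rw [edgeBoundOn_comm]
    exact hG.symm.ncard_edgeSet_inter_sym2_le_edgeBoundOn_of_ncard_eq hb.symm (by omega)
  by_contra! hcon
  have hdeg : ∀ v ∈ A, ℓ + 1 ≤ (G.neighborSet v ∩ A).ncard := by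
    intro v hv
    have hA' : (A \ {v}).ncard = k - 1 := by rw [ncard_sdiff_singleton_of_mem hv, hk]
    have hM' := pred_ncard_le_ncard_sdiff_singleton (M ∩ A) v
    have hN' := pred_ncard_le_ncard_sdiff_singleton (N ∩ A) v
    rw [inter_sdiff_assoc] at hM' hN'
    exact hG.le_ncard_neighborSet_inter_of_edgeBoundOn_lt hMN hv ha hb hcon <|
      IH (k - 1) (by omega) (A \ {v}) (by omega) (by omega) (by rw [hcard, hA']; omega) hA'
  have hconn : IsKConnected (ℓ + 1) (G.induce A) := by
    by_contra hnc
    obtain ⟨B₁, B₂, hA, hS, hne₁, hne₂, hsep⟩ :=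
      exists_separation_of_not_isKConnected (by rw [← hcard]; omega) hnc
    obtain ⟨h₁M, h₁N⟩ := hG.le_ncard_inter_of_separation hMN hA hsep hne₁ hdeg hS
    obtain ⟨h₂M, h₂N⟩ := hG.le_ncard_inter_of_separation hMN ((union_comm ..).trans hA)
      (fun x hx y hy hxy ↦ hsep y hy x hx hxy.symm) hne₂ hdeg (by rwa [inter_comm])
    have hlt : ∀ {B B' : Set V}, B ∪ B' = A → (B' \ B).Nonempty → B.ncard < k :=
      fun hBA ⟨x, hxB', hxB⟩ ↦ hk ▸ ncard_lt_ncard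
        ((ssubset_iff_of_subset (hBA ▸ subset_union_left)).2 ⟨x, hBA ▸ Or.inr hxB', hxB⟩)
    have e₁ := IH _ (hlt hA hne₂) B₁ (by omega) (by omega) (by omega) rfl
    have e₂ := IH _ (hlt ((union_comm ..).trans hA) hne₁) B₂ (by omega) (by omega) (by omega) rfl
    have hsplit : ((G.edgeSet ∩ A.sym2).ncard : ℝ) ≤
        (G.edgeSet ∩ B₁.sym2).ncard + (G.edgeSet ∩ B₂.sym2).ncard := by
      exact_mod_cast ncard_edgeSet_inter_sym2_le_add hA hsep
    have hF := edgeBoundOn_add_le_of_separation q ℓ hA (by omega) h₁M h₁N h₂M h₂N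
    linarith
  exact hcon.not_ge <| hG.ncard_edgeSet_inter_sym2_le_edgeBoundOn_of_ncard_le hMN ha.le hb.le hab
    (hno A hconn).le

end SimpleGraph.IsBipartiteWith

theorem stmt8 {V : Type*} [Fintype V] (q ℓ m n : ℕ) (hm : ℓ ≤ m) (hn : ℓ ≤ n)
    (hmn : 2 * ℓ + 1 ≤ m + n)
    (G : SimpleGraph V) (M N : Set V)
    (hpart : M ∪ N = Set.univ) (hdisj : Disjoint M N)
    (hbip : ∀ a b, G.Adj a b → (a ∈ M ∧ b ∈ N) ∨ (a ∈ N ∧ b ∈ M))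
    (hM : M.ncard = m) (hN : N.ncard = n)
    (hno : ∀ A : Set V, IsKConnected (ℓ + 1) (G.induce A) → A.ncard < q) :
    (G.edgeSet.ncard : ℝ) ≤
      (q : ℝ) * ((n : ℝ) - ℓ) * ((m : ℝ) - ℓ) / ((m : ℝ) + n - 2 * ℓ)
        + ((ℓ : ℝ) ^ 2 + ℓ) * ((m : ℝ) + n - 2 * ℓ) := by
  have hG : G.IsBipartiteWith M N := ⟨hdisj, fun a b ↦ hbip a b⟩
  have h := hG.ncard_edgeSet_inter_sym2_le_edgeBoundOn hpart hno univ
    (by rwa [inter_univ, hM]) (by rwa [inter_univ, hN]) (by rwa [inter_univ, inter_univ, hM, hN])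
  rw [sym2_univ, inter_univ, edgeBoundOn, inter_univ, inter_univ, hM, hN] at h
  refine h.trans_eq ?_
  rw [edgeBound]
  ring
end

section
/- Let n, k be natural numbers with n ≥ 13k - 15 and k ≥ 1. In any 2-colouring of the edges of K_n there is a monochromatic k-connected subgraph on at least n - 2k + 2 vertices. -/
open Set

theorem Set.ncard_mul_le_ncard_mul {α β : Type*} (r : α → β → Prop) {s : Set α} {t : Set β}
    (hs : s.Finite) (ht : t.Finite) {m n : ℕ} (hm : ∀ a ∈ s, m ≤ {b ∈ t | r a b}.ncard)
    (hn : ∀ b ∈ t, {a ∈ s | r a b}.ncard ≤ n) : s.ncard * m ≤ t.ncard * n := by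
  classical
  lift s to Finset α using hs
  lift t to Finset β using ht
  simp only [ncard_coe_finset]
  refine Finset.card_mul_le_card_mul r (fun a ha => ?_) (fun b hb => ?_)
  · simpa [Finset.bipartiteAbove, ← Finset.coe_filter] using hm a ha
  · simpa [Finset.bipartiteBelow, ← Finset.coe_filter] using hn b hb

namespace SimpleGraph

variable {V : Type*} {G : SimpleGraph V} {k d : ℕ}

def KConnectedOn (G : SimpleGraph V) (k : ℕ) (A : Set V) : Prop :=
  k < A.ncard ∧ ∀ D ⊆ A, D.ncard < k → (G.induce (A \ D)).Connected

def MissesAtMost (G : SimpleGraph V) (d : ℕ) (A B : Set V) : Prop :=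
  ∀ a ∈ A, (B \ G.neighborSet a).ncard ≤ d

theorem ncard_setOf_ncard_inter_neighborSet_le [Finite V] {A B : Set V}
    (hA : 2 * d + 1 ≤ A.ncard) (hmiss : G.MissesAtMost d A B) :
    {z ∈ B | (A ∩ G.neighborSet z).ncard ≤ d}.ncard ≤ 2 * d := by
  set bad := {z ∈ B | (A ∩ G.neighborSet z).ncard ≤ d}
  have hcount : bad.ncard * (A.ncard - d) ≤ A.ncard * d := by
    refine ncard_mul_le_ncard_mul (fun z a => ¬ G.Adj z a) (toFinite _) (toFinite _)
      (fun z hz => ?_) (fun a ha => ?_)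
    · have := ncard_inter_add_ncard_sdiff_eq_ncard A (G.neighborSet z)
      change A.ncard - d ≤ (A \ G.neighborSet z).ncard
      have hzd : (A ∩ G.neighborSet z).ncard ≤ d := hz.2
      omega
    · refine le_trans (ncard_le_ncard (fun z hz => ?_)) (hmiss a ha)
      exact ⟨hz.1.1, fun h => hz.2 h.symm⟩
  by_contra! hbad
  have hcount' : (2 * d + 1) * (A.ncard - d) ≤ A.ncard * d :=
    le_trans (Nat.mul_le_mul_right _ hbad) hcount
  obtain ⟨e, he⟩ : ∃ e, A.ncard = d + e := ⟨A.ncard - d, by omega⟩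
  rw [he, Nat.add_sub_cancel_left] at hcount'
  nlinarith

theorem reachable_induce_of_adj {C : Set V} {x y : V} (hx : x ∈ C) (hy : y ∈ C)
    (h : G.Adj x y) : (G.induce C).Reachable ⟨x, hx⟩ ⟨y, hy⟩ :=
  Adj.reachable (G := G.induce C) h

theorem kConnectedOn_union_of_missesAtMost [Finite V] (hk : 1 ≤ k) {A B : Set V}
    (hdisj : Disjoint A B) (hmiss : G.MissesAtMost d A B)
    (hdeg : ∀ b ∈ B, k ≤ (A ∩ G.neighborSet b).ncard)
    (hA : k ≤ A.ncard) (hB : 2 * d + k ≤ B.ncard) : G.KConnectedOn k (A ∪ B) := by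
  refine ⟨by rw [ncard_union_eq hdisj]; omega, fun D _ hD => ?_⟩
  obtain ⟨p₀, hp₀⟩ := sdiff_nonempty_of_ncard_lt_ncard (hD.trans_le hA)
  have hp₀' : p₀ ∈ (A ∪ B) \ D := ⟨Or.inl hp₀.1, hp₀.2⟩
  -- `p₀` and `p` together miss at most `2 d` vertices of `B`, so `B \ D` has a common neighbour
  have hA_reach : ∀ p (hp : p ∈ A \ D),
      (G.induce ((A ∪ B) \ D)).Reachable ⟨p₀, hp₀'⟩ ⟨p, Or.inl hp.1, hp.2⟩ := by
    intro p hp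
    have hlt : (D ∪ (B \ G.neighborSet p₀) ∪ (B \ G.neighborSet p)).ncard < B.ncard := by
      have := ncard_union_le (D ∪ (B \ G.neighborSet p₀)) (B \ G.neighborSet p)
      have := ncard_union_le D (B \ G.neighborSet p₀)
      have := hmiss p₀ hp₀.1
      have := hmiss p hp.1
      omega
    obtain ⟨r, hrB, hr⟩ := sdiff_nonempty_of_ncard_lt_ncard hlt
    simp only [mem_union, mem_sdiff, not_or, not_and, not_not] at hr
    have hr' : r ∈ (A ∪ B) \ D := ⟨Or.inr hrB, hr.1.1⟩
    exact (reachable_induce_of_adj hp₀' hr' (hr.1.2 hrB)).trans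
      (reachable_induce_of_adj _ hr' (hr.2 hrB)).symm
  rw [connected_iff_exists_forall_reachable]
  refine ⟨⟨p₀, hp₀'⟩, fun ⟨x, hx⟩ => ?_⟩
  rcases hx with ⟨hxA | hxB, hxD⟩
  · exact hA_reach x ⟨hxA, hxD⟩
  · obtain ⟨p, ⟨hpA, hpx⟩, hpD⟩ :=
      sdiff_nonempty_of_ncard_lt_ncard (hD.trans_le (hdeg x hxB)) (s := D)
    exact (hA_reach p ⟨hpA, hpD⟩).trans (reachable_induce_of_adj _ _ hpx).symm

theorem KConnectedOn.insert_of_le_ncard [Finite V] {Z : Set V} (hZ : G.KConnectedOn k Z) {v : V}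
    (hv : v ∉ Z) (hdeg : k ≤ (Z ∩ G.neighborSet v).ncard) : G.KConnectedOn k (insert v Z) := by
  refine ⟨by rw [ncard_insert_of_notMem hv]; exact hZ.1.trans (Nat.lt_succ_self _),
    fun D hD hDk => ?_⟩
  by_cases hvD : v ∈ D
  · have heq : insert v Z \ D = Z \ (D ∩ Z) := by
      ext x; by_cases hx : x = v <;> simp_all
    rw [heq]
    exact hZ.2 _ inter_subset_right ((ncard_inter_le_ncard_left _ _).trans_lt hDk)
  · have hDZ : D ⊆ Z := fun x hx => (hD hx).resolve_left (fun h => hvD (h ▸ hx))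
    obtain ⟨w, ⟨hwZ, hvw⟩, hwD⟩ := sdiff_nonempty_of_ncard_lt_ncard (hDk.trans_le hdeg) (s := D)
    have heq : insert v Z \ D = Z \ D ∪ {w, v} := by
      ext x; by_cases hx : x = v <;> by_cases hx' : x = w <;> simp_all
    rw [heq]
    exact induce_union_connected (hZ.2 D hDZ hDk).preconnected
      (induce_pair_connected_of_adj hvw.symm).preconnected ⟨w, ⟨hwZ, hwD⟩, by simp⟩

theorem KConnectedOn.isKConnected_induce {A : Set V} (h : G.KConnectedOn k A) :
    IsKConnected k (G.induce A) := by
  refine ⟨by rw [Nat.card_coe_set_eq]; exact h.1, fun S hS => ?_⟩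
  have hD : (Subtype.val '' S).ncard < k := by
    rwa [ncard_image_of_injective _ Subtype.val_injective]
  let φ : G.induce (A \ Subtype.val '' S) →g (G.induce A).induce Sᶜ :=
    { toFun := fun x => ⟨⟨x, x.2.1⟩, fun hx => x.2.2 ⟨_, hx, rfl⟩⟩
      map_rel' := id }
  refine (h.2 _ (image_subset_iff.2 fun x _ => x.2) hD).map φ fun y => ⟨⟨y, y.1.2, ?_⟩, rfl⟩
  rintro ⟨x, hx, hxy⟩
  exact y.2 (Subtype.ext hxy ▸ hx)

def HasLargeKConnectedSet (G : SimpleGraph V) (k : ℕ) : Prop :=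
  ∃ A : Set V, Nat.card V - 2 * k + 2 ≤ A.ncard ∧ G.KConnectedOn k A

theorem hasLargeKConnectedSet_of_missesAtMost [Finite V] (hk : 1 ≤ k) {A : Set V}
    (hA : 2 * k - 1 ≤ A.ncard) (hAc : 5 * k - 4 ≤ Aᶜ.ncard) (hmiss : G.MissesAtMost (k - 1) A Aᶜ) :
    G.HasLargeKConnectedSet k := by
  set bad := {z ∈ Aᶜ | (A ∩ G.neighborSet z).ncard ≤ k - 1}
  have hbad : bad.ncard ≤ 2 * (k - 1) :=
    ncard_setOf_ncard_inter_neighborSet_le (by omega) hmiss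
  have hdisj : Disjoint A (Aᶜ \ bad) := disjoint_compl_right.mono_right sdiff_subset
  have hB := le_ncard_sdiff bad Aᶜ
  refine ⟨A ∪ Aᶜ \ bad, ?_, kConnectedOn_union_of_missesAtMost hk hdisj
    (fun a ha => (ncard_le_ncard (sdiff_subset_sdiff_left sdiff_subset)).trans (hmiss a ha))
    (fun b hb => by
      have : ¬ (A ∩ G.neighborSet b).ncard ≤ k - 1 := fun h => hb.2 ⟨hb.1, h⟩
      omega)
    (by omega) (by omega)⟩
  rw [ncard_union_eq hdisj, ← ncard_add_ncard_compl A]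
  omega

theorem KConnectedOn.hasLargeKConnectedSet [Finite V] (hk : 1 ≤ k) {Z₀ : Set V}
    (hZ₀ : G.KConnectedOn k Z₀) (hsize : 5 * k - 4 ≤ Z₀.ncard) :
    G.HasLargeKConnectedSet k ∨ Gᶜ.HasLargeKConnectedSet k := by
  obtain ⟨Z, ⟨hZ₀Z, hZ⟩, hmax⟩ := (toFinite {Z | Z₀ ⊆ Z ∧ G.KConnectedOn k Z}).exists_maximalFor
    ncard _ ⟨Z₀, subset_rfl, hZ₀⟩
  by_cases hlarge : Nat.card V - 2 * k + 2 ≤ Z.ncard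
  · exact Or.inl ⟨Z, hlarge, hZ⟩
  have hfew : ∀ v ∉ Z, (Z ∩ G.neighborSet v).ncard ≤ k - 1 := by
    intro v hv
    by_contra! hdeg
    have hins := hmax ⟨hZ₀Z.trans (subset_insert v Z), hZ.insert_of_le_ncard hv (by omega)⟩
      (ncard_le_ncard (subset_insert v Z))
    rw [ncard_insert_of_notMem hv] at hins
    omega
  have hmiss : Gᶜ.MissesAtMost (k - 1) Zᶜ Zᶜᶜ := by
    intro v hv
    rw [compl_compl, neighborSet_compl]
    refine (ncard_le_ncard fun x hx => ?_).trans (hfew v hv)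
    simp only [mem_sdiff, mem_compl_iff, mem_singleton_iff, not_and, not_not] at hx
    exact ⟨hx.1, by_contra fun h => hv (hx.2 h ▸ hx.1)⟩
  have hZn := ncard_add_ncard_compl Z
  have hZ₀le := ncard_le_ncard hZ₀Z
  have hkZ := hZ.1
  exact Or.inr (hasLargeKConnectedSet_of_missesAtMost hk (by omega) (by rw [compl_compl]; omega)
    hmiss)

theorem kConnectedOn_union_of_forall_adj [Finite V] (hk : 1 ≤ k) {A B : Set V}
    (hdisj : Disjoint A B) (hadj : ∀ a ∈ A, ∀ b ∈ B, G.Adj a b)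
    (hA : k ≤ A.ncard) (hB : k ≤ B.ncard) : G.KConnectedOn k (A ∪ B) := by
  refine kConnectedOn_union_of_missesAtMost (d := 0) hk hdisj (fun a ha => ?_) (fun b hb => ?_) hA
    (by omega)
  · rw [nonpos_iff_eq_zero, ncard_eq_zero, sdiff_eq_empty]
    exact fun b hb => hadj a ha b hb
  · exact hA.trans (ncard_le_ncard fun a ha => ⟨ha, (hadj a ha b hb).symm⟩)

theorem exists_separation_of_not_connected {W : Set V} (hW : W.Nonempty)
    (h : ¬ (G.induce W).Connected) :
    ∃ X Y : Set V, X.Nonempty ∧ X.ncard ≤ Y.ncard ∧ X ∪ Y = W ∧ Disjoint X Y ∧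
      ∀ x ∈ X, ∀ y ∈ Y, ¬ G.Adj x y := by
  obtain ⟨u, v, huv⟩ : ∃ u v : W, ¬ (G.induce W).Reachable u v := by
    by_contra! hpre
    exact h ((connected_iff _).2 ⟨hpre, hW.to_subtype⟩)
  set X := Subtype.val '' {x | (G.induce W).Reachable u x}
  have hXW : X ⊆ W := image_subset_iff.2 fun x _ => x.2
  have hv : v.1 ∈ W \ X := ⟨v.2, fun ⟨x, hx, hxv⟩ => huv (Subtype.ext hxv ▸ hx)⟩
  have hnoadj : ∀ x ∈ X, ∀ y ∈ W \ X, ¬ G.Adj x y := by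
    rintro _ ⟨x, hx, rfl⟩ y ⟨hyW, hyX⟩ hxy
    exact hyX ⟨⟨y, hyW⟩, hx.trans (reachable_induce_of_adj _ _ hxy), rfl⟩
  rcases le_total X.ncard (W \ X).ncard with hle | hle
  · exact ⟨X, W \ X, ⟨u, u, Reachable.refl u, rfl⟩, hle, union_sdiff_cancel hXW,
      disjoint_sdiff_right, hnoadj⟩
  · exact ⟨W \ X, X, ⟨v, hv⟩, hle, by rw [union_comm, union_sdiff_cancel hXW],
      disjoint_sdiff_left, fun y hy x hx hyx => hnoadj x hx y hy hyx.symm⟩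

theorem missesAtMost_compl_sdiff [Finite V] {U D X Y : Set V}
    (hU : Gᶜ.MissesAtMost d Uᶜ U) (hD : D.ncard ≤ d) (hXY : X ∪ Y = U \ D)
    (hdisj : Disjoint X Y) (hnoadj : ∀ x ∈ X, ∀ y ∈ Y, ¬ G.Adj x y) :
    Gᶜ.MissesAtMost d (U \ X)ᶜ (U \ X) := by
  intro a ha
  by_cases haU : a ∈ U
  · have haX : a ∈ X := by simpa [haU] using ha
    -- `a` is joined in `Gᶜ` to all of `Y`, so it can only miss vertices of `D`
    refine (ncard_le_ncard fun x hx => ?_).trans hD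
    by_contra hxD
    have hxY : x ∈ Y := by
      have hx' : x ∈ X ∪ Y := hXY ▸ ⟨hx.1.1, hxD⟩
      exact hx'.resolve_left hx.1.2
    exact hx.2 ((compl_adj G a x).2
      ⟨fun h => Set.disjoint_left.1 hdisj haX (h ▸ hxY), hnoadj a haX x hxY⟩)
  · exact (ncard_le_ncard (sdiff_subset_sdiff_left sdiff_subset)).trans (hU a haU)

theorem hasLargeKConnectedSet_of_missesAtMost_compl [Finite V] (hk : 1 ≤ k)
    (hV₂ : 2 ≤ Nat.card V) (hV : 8 * k ≤ Nat.card V + 7) {U : Set V}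
    (hUc : Uᶜ.ncard ≤ 2 * k - 2) (hmiss : Gᶜ.MissesAtMost (k - 1) Uᶜ U) :
    G.HasLargeKConnectedSet k ∨ Gᶜ.HasLargeKConnectedSet k := by
  induction hm : U.ncard using Nat.strong_induction_on generalizing U with
  | _ m ih =>
  have hUn := ncard_add_ncard_compl U
  by_cases hconn : G.KConnectedOn k U
  · exact Or.inl ⟨U, by omega, hconn⟩
  obtain ⟨D, hDU, hDk, hdisc⟩ : ∃ D ⊆ U, D.ncard < k ∧ ¬ (G.induce (U \ D)).Connected := by
    simpa [KConnectedOn, show k < U.ncard by omega] using hconn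
  obtain ⟨X, Y, hX, hXY, hXYU, hdisj, hnoadj⟩ :=
    exists_separation_of_not_connected (sdiff_nonempty_of_ncard_lt_ncard (by omega)) hdisc
  have hsizes : X.ncard + Y.ncard + D.ncard = U.ncard := by
    rw [← ncard_union_eq hdisj, hXYU, ncard_sdiff hDU]
    have hDle := ncard_le_ncard hDU
    omega
  by_cases hXk : k ≤ X.ncard
  · have hXYc : Gᶜ.KConnectedOn k (X ∪ Y) :=
      kConnectedOn_union_of_forall_adj hk hdisj (fun x hx y hy => (compl_adj G x y).2
        ⟨fun h => Set.disjoint_left.1 hdisj hx (h ▸ hy), hnoadj x hx y hy⟩) hXk (hXk.trans hXY)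
    simpa only [compl_compl, or_comm] using
      hXYc.hasLargeKConnectedSet hk (by rw [ncard_union_eq hdisj]; omega)
  have hXU : X ⊆ U := fun x hx => (hXYU ▸ Or.inl hx : x ∈ U \ D).1
  have hU' := ncard_add_ncard_compl (U \ X)
  have hUX := ncard_sdiff hXU
  have hXpos := hX.ncard_pos
  have hmiss' := missesAtMost_compl_sdiff hmiss (Nat.le_sub_one_of_lt hDk) hXYU hdisj hnoadj
  by_cases hsmall : (U \ X)ᶜ.ncard ≤ 2 * k - 2
  · exact ih _ (by omega) hsmall hmiss' rfl
  · refine Or.inr (hasLargeKConnectedSet_of_missesAtMost (A := (U \ X)ᶜ) hk (by omega) ?_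
      (by rwa [compl_compl]))
    rw [compl_compl]
    omega

theorem hasLargeKConnectedSet_or_compl [Finite V] (G : SimpleGraph V) (hk : 1 ≤ k)
    (hV₂ : 2 ≤ Nat.card V) (hV : 8 * k ≤ Nat.card V + 7) :
    G.HasLargeKConnectedSet k ∨ Gᶜ.HasLargeKConnectedSet k :=
  hasLargeKConnectedSet_of_missesAtMost_compl hk hV₂ hV (U := univ) (by simp)
    (by simp [MissesAtMost])

end SimpleGraph

theorem colorGraph_two_compl {n : ℕ} (f : Sym2 (Fin n) → Fin 2) :
    (colorGraph n 2 f 0)ᶜ = colorGraph n 2 f 1 := by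
  ext a b
  simp only [SimpleGraph.compl_adj, colorGraph]
  omega

theorem stmt9 (n k : ℕ) (hk : 1 ≤ k) (hn2 : 2 ≤ n) (hn : 13 * k - 15 ≤ n)
    (f : Sym2 (Fin n) → Fin 2) :
    ∃ (i : Fin 2) (A : Set (Fin n)), n - 2 * k + 2 ≤ A.ncard ∧
      IsKConnected k ((colorGraph n 2 f i).induce A) := by
  rcases (colorGraph n 2 f 0).hasLargeKConnectedSet_or_compl hk (by rwa [Nat.card_fin])
      (by rw [Nat.card_fin]; omega) with
    ⟨A, hA, hconn⟩ | ⟨A, hA, hconn⟩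
  · exact ⟨0, A, by simpa using hA, hconn.isKConnected_induce⟩
  · rw [colorGraph_two_compl] at hconn
    exact ⟨1, A, by simpa using hA, hconn.isKConnected_induce⟩
end

section
/- Let n, k be natural numbers with n ≥ 4k - 3. There is a 2-colouring of E(K_n) with no monochromatic k-connected subgraph on more than n - 2k + 2 vertices: partition V(K_n) into sets A_1, A_2, A_3, A_4 of size k-1 and B of size n - 4k + 4; colour edges between A_i and B red for i ∈ {1,2} and blue for i ∈ {3,4}; colour A_i–A_j edges red if {i,j} ∈ {{1,2},{1,3},{2,4}} and blue otherwise; colour edges inside classes arbitrarily. Then every monochromatic k-connected subgraph of this coloured K_n has at most n - 2k + 2 vertices. -/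
lemma walk_closed {V : Type*} {G : SimpleGraph V} (P : V → Prop)
    (hP : ∀ x y, P x → G.Adj x y → P y) :
    ∀ {u v : V}, G.Walk u v → P u → P v := by
  intro u v w
  induction w with
  | nil => exact id
  | cons ha _ ih => exact fun hu => ih (hP _ _ hu ha)

lemma key {n : ℕ} (H : SimpleGraph (Fin n)) (A C X : Set (Fin n)) (k : ℕ)
    (hk : 1 ≤ k) (hC : C.ncard ≤ k - 1) (hCX : Disjoint C X)
    (hkc : IsKConnected k (H.induce A))
    (hclosed : ∀ x y, x ∈ X → H.Adj x y → y ∉ C → y ∈ X) :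
    A ∩ X = ∅ ∨ A ⊆ C ∪ X := by
  by_contra hcon
  push_neg at hcon
  obtain ⟨h1, h2⟩ := hcon
  obtain ⟨u, huA, huX⟩ := h1
  obtain ⟨v, hvA, hvCX⟩ := Set.not_subset.1 h2
  set S : Set ↥A := Subtype.val ⁻¹' C with hSdef
  have hSsub : (Subtype.val '' S : Set (Fin n)) ⊆ C := by
    rintro _ ⟨x, hx, rfl⟩; exact hx
  have hS : S.ncard < k := by
    have e1 : (Subtype.val '' S).ncard = S.ncard :=
      Set.ncard_image_of_injective S Subtype.val_injective
    have e2 : (Subtype.val '' S).ncard ≤ C.ncard :=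
      Set.ncard_le_ncard hSsub C.toFinite
    omega
  have conn := hkc.2 S hS
  have huC : u ∉ C := fun h => hCX.ne_of_mem h huX rfl
  have hvC : v ∉ C := fun h => hvCX (Or.inl h)
  set u' : ↥(Sᶜ : Set ↥A) := ⟨⟨u, huA⟩, huC⟩ with hu'
  set v' : ↥(Sᶜ : Set ↥A) := ⟨⟨v, hvA⟩, hvC⟩ with hv'
  obtain ⟨w⟩ := conn.preconnected u' v'
  have hP : ∀ x y : ↥(Sᶜ : Set ↥A),
      (x : ↥A).1 ∈ X → ((H.induce A).induce (Sᶜ : Set ↥A)).Adj x y → (y : ↥A).1 ∈ X := by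
    intro x y hx hxy
    have hadj : H.Adj (x : ↥A).1 (y : ↥A).1 := hxy
    have hyC : (y : ↥A).1 ∉ C := y.2
    exact hclosed _ _ hx hadj hyC
  have := walk_closed _ hP w huX
  exact hvCX (Or.inr this)

theorem stmt10 (n k : ℕ) (hk : 1 ≤ k) (hn : 4 * k - 3 ≤ n)
    (A1 A2 A3 A4 B : Set (Fin n)) (R : SimpleGraph (Fin n))
    (hcover : A1 ∪ A2 ∪ A3 ∪ A4 ∪ B = Set.univ)
    (d12 : Disjoint A1 A2) (d13 : Disjoint A1 A3) (d14 : Disjoint A1 A4)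
    (d23 : Disjoint A2 A3) (d24 : Disjoint A2 A4) (d34 : Disjoint A3 A4)
    (d1B : Disjoint A1 B) (d2B : Disjoint A2 B) (d3B : Disjoint A3 B)
    (d4B : Disjoint A4 B)
    (hA1 : A1.ncard = k - 1) (hA2 : A2.ncard = k - 1)
    (hA3 : A3.ncard = k - 1) (hA4 : A4.ncard = k - 1)
    (hB : B.ncard = n - 4 * k + 4)
    (r12 : ∀ a ∈ A1, ∀ b ∈ A2, R.Adj a b)
    (r13 : ∀ a ∈ A1, ∀ b ∈ A3, R.Adj a b)
    (r24 : ∀ a ∈ A2, ∀ b ∈ A4, R.Adj a b)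
    (b14 : ∀ a ∈ A1, ∀ b ∈ A4, ¬ R.Adj a b)
    (b23 : ∀ a ∈ A2, ∀ b ∈ A3, ¬ R.Adj a b)
    (b34 : ∀ a ∈ A3, ∀ b ∈ A4, ¬ R.Adj a b)
    (r1B : ∀ a ∈ A1, ∀ b ∈ B, R.Adj a b)
    (r2B : ∀ a ∈ A2, ∀ b ∈ B, R.Adj a b)
    (b3B : ∀ a ∈ A3, ∀ b ∈ B, ¬ R.Adj a b)
    (b4B : ∀ a ∈ A4, ∀ b ∈ B, ¬ R.Adj a b) :
    ∀ (H : SimpleGraph (Fin n)) (A : Set (Fin n)),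
      (H ≤ R ∨ H ≤ Rᶜ) → IsKConnected k (H.induce A) →
        A.ncard ≤ n - 2 * k + 2 := by
  intro H A hcol hkc
  -- membership case analysis helper
  have hmem : ∀ y : Fin n, y ∈ A1 ∨ y ∈ A2 ∨ y ∈ A3 ∨ y ∈ A4 ∨ y ∈ B := by
    intro y
    have : y ∈ A1 ∪ A2 ∪ A3 ∪ A4 ∪ B := hcover ▸ Set.mem_univ y
    simp only [Set.mem_union] at this
    tauto
  -- arithmetic helpers
  have hsmall : ∀ X Y : Set (Fin n), X.ncard ≤ k - 1 → Y.ncard ≤ k - 1 →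
      A ⊆ X ∪ Y → A.ncard ≤ n - 2 * k + 2 := by
    intro X Y hX hY hsub
    have h1 : A.ncard ≤ (X ∪ Y).ncard := Set.ncard_le_ncard hsub (X ∪ Y).toFinite
    have h2 : (X ∪ Y).ncard ≤ X.ncard + Y.ncard := Set.ncard_union_le X Y
    omega
  have hmiss : ∀ X Y : Set (Fin n), X.ncard = k - 1 → Y.ncard = k - 1 →
      Disjoint X Y → A ∩ X = ∅ → A ∩ Y = ∅ → A.ncard ≤ n - 2 * k + 2 := by
    intro X Y hX hY hXY hAX hAY
    have dAX : Disjoint A X := Set.disjoint_iff_inter_eq_empty.2 hAX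
    have dAY : Disjoint A Y := Set.disjoint_iff_inter_eq_empty.2 hAY
    have dA : Disjoint A (X ∪ Y) := Set.disjoint_union_right.2 ⟨dAX, dAY⟩
    have e1 : (X ∪ Y).ncard = X.ncard + Y.ncard := Set.ncard_union_eq hXY
    have e2 : (A ∪ (X ∪ Y)).ncard = A.ncard + (X ∪ Y).ncard := Set.ncard_union_eq dA
    have e3 : (A ∪ (X ∪ Y)).ncard ≤ n := by
      have := Set.ncard_le_ncard (Set.subset_univ (A ∪ (X ∪ Y))) Set.finite_univ
      simpa [Set.ncard_univ] using this
    omega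
  rcases hcol with hred | hblue
  · -- red case
    have c3 : A ∩ A3 = ∅ ∨ A ⊆ A1 ∪ A3 := by
      refine key H A A1 A3 k hk (le_of_eq hA1) d13 hkc ?_
      intro x y hx hxy hy1
      have hR : R.Adj x y := hred hxy
      rcases hmem y with h | h | h | h | h
      · exact absurd h hy1
      · exact absurd hR.symm (b23 y h x hx)
      · exact h
      · exact absurd hR (b34 x hx y h)
      · exact absurd hR (b3B x hx y h)
    have c4 : A ∩ A4 = ∅ ∨ A ⊆ A2 ∪ A4 := by
      refine key H A A2 A4 k hk (le_of_eq hA2) d24 hkc ?_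
      intro x y hx hxy hy2
      have hR : R.Adj x y := hred hxy
      rcases hmem y with h | h | h | h | h
      · exact absurd hR.symm (b14 y h x hx)
      · exact absurd h hy2
      · exact absurd hR.symm (b34 y h x hx)
      · exact h
      · exact absurd hR (b4B x hx y h)
    rcases c3 with c3 | c3
    · rcases c4 with c4 | c4
      · exact hmiss A3 A4 hA3 hA4 d34 c3 c4
      · exact hsmall A2 A4 (le_of_eq hA2) (le_of_eq hA4) c4
    · exact hsmall A1 A3 (le_of_eq hA1) (le_of_eq hA3) c3
  · -- blue case
    have hblue' : ∀ x y, H.Adj x y → ¬ R.Adj x y := by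
      intro x y hxy
      exact (hblue hxy).2
    have c1 : A ∩ A1 = ∅ ∨ A ⊆ A4 ∪ A1 := by
      refine key H A A4 A1 k hk (le_of_eq hA4) d14.symm hkc ?_
      intro x y hx hxy hy4
      have hR : ¬ R.Adj x y := hblue' x y hxy
      rcases hmem y with h | h | h | h | h
      · exact h
      · exact absurd (r12 x hx y h) hR
      · exact absurd (r13 x hx y h) hR
      · exact absurd h hy4
      · exact absurd (r1B x hx y h) hR
    have c2 : A ∩ A2 = ∅ ∨ A ⊆ A3 ∪ A2 := by
      refine key H A A3 A2 k hk (le_of_eq hA3) d23.symm hkc ?_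
      intro x y hx hxy hy3
      have hR : ¬ R.Adj x y := hblue' x y hxy
      rcases hmem y with h | h | h | h | h
      · exact absurd (r12 y h x hx).symm hR
      · exact h
      · exact absurd h hy3
      · exact absurd (r24 x hx y h) hR
      · exact absurd (r2B x hx y h) hR
    rcases c1 with c1 | c1
    · rcases c2 with c2 | c2
      · exact hmiss A1 A2 hA1 hA2 d12 c1 c2
      · exact hsmall A3 A2 (le_of_eq hA3) (le_of_eq hA2) c2
    · exact hsmall A4 A1 (le_of_eq hA4) (le_of_eq hA1) c1
end

section
/- Let n, r, k be natural numbers with r ≥ 2, n ≥ r(k-1), and r - 1 a prime power. Then there is an r-colouring of E(K_n) in which every monochromatic k-connected subgraph has at most (n-k+1)/(r-1) + r vertices; moreover if (r-1)² divides n - r(k-1), the bound (n-k+1)/(r-1) holds. -/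
/-!
Take a field `F` with `q = r - 1` elements and the affine plane `F × F`, whose `q + 1 = r`
parallel classes are identified with the colours. Apart from `r` classes `C_i` of `k - 1`
vertices, the vertices are spread over the points of the plane, at most
`D = ⌈(n - r(k-1)) / q²⌉` per point. An edge between two points gets the parallel class of the
line joining them, an edge at `C_i` gets colour `i`. Deleting `C_i` (fewer than `k` vertices)
from a `k`-connected subgraph of colour `i` leaves a connected graph of colour `i` all of whose
vertices sit at points, hence on a single line of class `i`; so the subgraph has at most
`(k - 1) + q D` vertices.
-/

open Finset

theorem SimpleGraph.Connected.exists_forall_eq_some {V β : Type*} [Nontrivial V]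
    {G : SimpleGraph V} (hG : G.Connected) {g : V → Option β}
    (hg : ∀ ⦃u v⦄, G.Adj u v → ∃ b, g u = some b ∧ g v = some b) :
    ∃ b, ∀ v, g v = some b := by
  have hwalk : ∀ {u v} (_ : G.Walk u v), g u = g v := by
    intro u v p
    induction p with
    | nil => rfl
    | cons huv _ ih =>
      obtain ⟨b, hu, hv⟩ := hg huv
      exact hu.trans (hv.symm.trans ih)
  obtain ⟨v₀⟩ := hG.nonempty
  obtain ⟨u, hu⟩ := hG.preconnected.exists_adj_of_nontrivial v₀
  obtain ⟨b, hb, -⟩ := hg hu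
  exact ⟨b, fun v => (hwalk (hG.preconnected v v₀).some).trans hb⟩

theorem IsKConnected.exists_subset_union {V β : Type*} [Finite V] {G : SimpleGraph V}
    {A C : Set V} {k : ℕ} (hA : IsKConnected k (G.induce A)) (hC : C.ncard < k)
    {g : V → Option β}
    (hg : ∀ ⦃u v⦄, u ∉ C → v ∉ C → G.Adj u v → ∃ b, g u = some b ∧ g v = some b) :
    ∃ b, A ⊆ C ∪ {v | g v = some b} := by
  obtain ⟨hcard, hconn⟩ := hA
  set S : Set A := Subtype.val ⁻¹' C
  have hS : S.ncard < k := lt_of_le_of_lt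
    (Set.ncard_le_ncard_of_injOn Subtype.val (fun _ h => h) Subtype.val_injective.injOn) hC
  have : Nontrivial ↥Sᶜ := by
    have hsplit := Set.ncard_add_ncard_compl S
    exact (Set.one_lt_ncard_iff_nontrivial.mp (by omega)).coe_sort
  obtain ⟨b, hb⟩ := (hconn S hS).exists_forall_eq_some (g := fun x => g x.1.1)
    fun x y hxy => hg x.2 y.2 hxy
  refine ⟨b, fun v hv => ?_⟩
  by_cases hvC : v ∈ C
  · exact Or.inl hvC
  · exact Or.inr (hb ⟨⟨v, hv⟩, hvC⟩)

theorem exists_fun_card_fiber_le {α : Type*} [Fintype α] [DecidableEq α] (cap : α → ℕ)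
    {n : ℕ} (h : n ≤ ∑ a, cap a) : ∃ π : Fin n → α, ∀ a, #{v | π v = a} ≤ cap a := by
  obtain ⟨e⟩ : Nonempty (Fin n ↪ Σ a, Fin (cap a)) :=
    Function.Embedding.nonempty_of_card_le (by simpa using h)
  refine ⟨fun v => (e v).1, fun a => ?_⟩
  calc #{v | (e v).1 = a}
      ≤ #(univ.map ⟨Sigma.mk a, sigma_mk_injective⟩) := by
        refine card_le_card_of_injOn e ?_ e.injective.injOn
        intro v hv
        simp only [coe_filter, mem_univ, true_and, Set.mem_ofPred_eq] at hv
        generalize e v = x at hv ⊢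
        obtain ⟨b, y⟩ := x
        subst hv
        simp
    _ = cap a := by simp

namespace AffinePlane

variable {F : Type*} [Field F]

/-- Parallel classes of lines of `F × F` are indexed by `Option F`: `none` is the class of the
vertical lines `x = c`, `some s` that of the lines `y = s * x + c`. `intercept s P` is the `c` of
the line of class `s` through `P`. -/
def intercept : Option F → F × F → F
  | none, P => P.1
  | some s, P => P.2 - s * P.1

variable [DecidableEq F]

def lineClass (P Q : F × F) : Option F :=
  if P.1 = Q.1 then none else some ((P.2 - Q.2) / (P.1 - Q.1))

theorem lineClass_comm (P Q : F × F) : lineClass P Q = lineClass Q P := by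
  unfold lineClass
  split_ifs with h h' h'
  · rfl
  · exact absurd h.symm h'
  · exact absurd h'.symm h
  · rw [← neg_sub, ← neg_sub Q.1, neg_div_neg_eq]

theorem intercept_lineClass (P Q : F × F) :
    intercept (lineClass P Q) P = intercept (lineClass P Q) Q := by
  unfold lineClass
  split_ifs with h
  · exact h
  · have : P.1 - Q.1 ≠ 0 := sub_ne_zero.mpr h
    simp only [intercept]
    field_simp
    ring

theorem card_filter_intercept_eq_le [Fintype F] (s : Option F) (c : F) :
    #{P : F × F | intercept s P = c} ≤ Fintype.card F := by
  cases s with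
  | none =>
    refine (card_le_card_of_injOn Prod.snd (fun _ _ => mem_coe.2 (mem_univ _)) ?_).trans_eq
      card_univ
    intro P hP Q hQ h
    rw [mem_coe, mem_filter] at hP hQ
    exact Prod.ext (hP.2.trans hQ.2.symm) h
  | some s =>
    refine (card_le_card_of_injOn Prod.fst (fun _ _ => mem_coe.2 (mem_univ _)) ?_).trans_eq
      card_univ
    intro P hP Q hQ h
    rw [mem_coe, mem_filter] at hP hQ
    refine Prod.ext h ?_
    have : P.2 - s * P.1 = Q.2 - s * Q.1 := hP.2.trans hQ.2.symm
    rw [h] at this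
    exact sub_left_inj.mp this

variable {r : ℕ} (e : Fin r ≃ Option F)

/-- The colouring of the label set: `inl i` labels the vertices of the class `C_i`, `inr P` the
vertices placed at the point `P`. -/
def planeColour : Fin r ⊕ (F × F) → Fin r ⊕ (F × F) → Fin r
  | .inl i, .inl j => min i j
  | .inl i, .inr _ => i
  | .inr _, .inl j => j
  | .inr P, .inr Q => e.symm (lineClass P Q)

theorem planeColour_comm (x y : Fin r ⊕ (F × F)) : planeColour e x y = planeColour e y x := by
  rcases x with i | P <;> rcases y with j | Q <;> simp [planeColour, min_comm, lineClass_comm]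

def lineThrough (s : Option F) : Fin r ⊕ (F × F) → Option F :=
  Sum.elim (fun _ => none) (fun P => some (intercept s P))

theorem exists_lineThrough_eq_of_planeColour_eq {i : Fin r} {x y : Fin r ⊕ (F × F)}
    (h : planeColour e x y = i) (hx : x ≠ .inl i) (hy : y ≠ .inl i) :
    ∃ c, lineThrough (e i) x = some c ∧ lineThrough (e i) y = some c := by
  rcases x with j | P <;> rcases y with j' | Q
  · rcases min_choice j j' with hj | hj
    · exact absurd (congrArg Sum.inl (hj.symm.trans h)) hx
    · exact absurd (congrArg Sum.inl (hj.symm.trans h)) hy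
  · exact absurd (congrArg Sum.inl h) hx
  · exact absurd (congrArg Sum.inl h) hy
  · have hPQ : lineClass P Q = e i := (Equiv.symm_apply_eq e).mp h
    exact ⟨intercept (e i) P, rfl, by rw [← hPQ, intercept_lineClass]; rfl⟩

def affineColouring {n : ℕ} (π : Fin n → Fin r ⊕ (F × F)) : Sym2 (Fin n) → Fin r :=
  Sym2.lift ⟨fun u v => planeColour e (π u) (π v), fun _ _ => planeColour_comm e _ _⟩

variable [Fintype F]

theorem card_filter_lineThrough_le {n D : ℕ} (π : Fin n → Fin r ⊕ (F × F))
    (hD : ∀ P, #{v | π v = .inr P} ≤ D) (s : Option F) (c : F) :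
    #{v | lineThrough s (π v) = some c} ≤ Fintype.card F * D := by
  calc #{v | lineThrough s (π v) = some c}
      ≤ D * #((univ.filter (intercept s · = c)).map (.inr : F × F ↪ Fin r ⊕ (F × F))) := by
        refine card_le_mul_card_image_of_maps_to (f := π) (fun v hv => ?_) D (fun b hb => ?_)
        · rw [mem_filter] at hv
          rcases hx : π v with j | P <;> rw [hx] at hv
          · exact absurd hv.2 (Option.some_ne_none c).symm
          · exact mem_map_of_mem _ (mem_filter.mpr ⟨mem_univ P, Option.some_injective _ hv.2⟩)
        · obtain ⟨P, -, rfl⟩ := mem_map.mp hb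
          exact (card_le_card (filter_subset_filter _ (subset_univ _))).trans (hD P)
    _ ≤ Fintype.card F * D := by
        rw [card_map, mul_comm]
        exact Nat.mul_le_mul_right _ (card_filter_intercept_eq_le s c)

theorem ncard_le_of_isKConnected {n k K D : ℕ} {π : Fin n → Fin r ⊕ (F × F)}
    (hK : ∀ j, #{v | π v = .inl j} ≤ K) (hD : ∀ P, #{v | π v = .inr P} ≤ D) (hKk : K < k)
    {i : Fin r} {H : SimpleGraph (Fin n)} {A : Set (Fin n)}
    (hH : H ≤ colorGraph n r (affineColouring e π) i) (hA : IsKConnected k (H.induce A)) :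
    A.ncard ≤ K + Fintype.card F * D := by
  set C : Set (Fin n) := {v | π v = .inl i}
  have hC : C.ncard ≤ K := by
    rw [Set.ncard_eq_toFinset_card', Set.toFinset_ofPred]
    exact hK i
  obtain ⟨c, hc⟩ := hA.exists_subset_union (hC.trans_lt hKk)
    (g := fun v => lineThrough (e i) (π v))
    fun u v hu hv huv => exists_lineThrough_eq_of_planeColour_eq e (hH huv).2 hu hv
  have hW : {v | lineThrough (e i) (π v) = some c}.ncard ≤ Fintype.card F * D := by
    rw [Set.ncard_eq_toFinset_card', Set.toFinset_ofPred]
    exact card_filter_lineThrough_le π hD _ _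
  calc A.ncard ≤ (C ∪ {v | lineThrough (e i) (π v) = some c}).ncard := Set.ncard_le_ncard hc
    _ ≤ C.ncard + {v | lineThrough (e i) (π v) = some c}.ncard := Set.ncard_union_le _ _
    _ ≤ K + Fintype.card F * D := add_le_add hC hW

theorem exists_colouring_ncard_le {n k K D : ℕ} (hr : r = Fintype.card F + 1) (hKk : K < k)
    (hn : n ≤ r * K + Fintype.card F ^ 2 * D) :
    ∃ f : Sym2 (Fin n) → Fin r, ∀ i H A, H ≤ colorGraph n r f i →
      IsKConnected k (H.induce A) → A.ncard ≤ K + Fintype.card F * D := by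
  obtain ⟨π, hπ⟩ :=
    exists_fun_card_fiber_le (Sum.elim (fun _ : Fin r => K) (fun _ : F × F => D))
      (by simpa [sq, mul_comm] using hn)
  let e : Fin r ≃ Option F := Fintype.equivOfCardEq (by simp [hr])
  exact ⟨affineColouring e π, fun i H A hH hA =>
    ncard_le_of_isKConnected e (fun j => hπ (.inl j)) (fun P => hπ (.inr P)) hKk hH hA⟩

end AffinePlane

theorem exists_fintype_field_card_eq {q : ℕ} (hq : IsPrimePow q) :
    ∃ (F : Type) (_ : Field F) (_ : Fintype F), Fintype.card F = q := by
  obtain ⟨_⟩ :=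
    Fintype.nonempty_field_iff.mpr (by simpa using hq : IsPrimePow (Fintype.card (Fin q)))
  exact ⟨Fin q, ‹_›, inferInstance, Fintype.card_fin q⟩

theorem le_sq_mul_ceil_div (m : ℕ) {q : ℕ} (hq : 0 < q) : m ≤ q ^ 2 * ⌈(m : ℝ) / q ^ 2⌉₊ := by
  have := Nat.le_ceil ((m : ℝ) / q ^ 2)
  rw [div_le_iff₀' (by positivity)] at this
  exact_mod_cast this

theorem mul_ceil_div_sq_lt (m : ℕ) {q : ℕ} (hq : 0 < q) :
    (q : ℝ) * ⌈(m : ℝ) / q ^ 2⌉₊ < m / q + q := by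
  have hq' : (0 : ℝ) < q := by exact_mod_cast hq
  calc (q : ℝ) * ⌈(m : ℝ) / q ^ 2⌉₊ < q * ((m : ℝ) / q ^ 2 + 1) :=
        mul_lt_mul_of_pos_left (Nat.ceil_lt_add_one (by positivity)) hq'
    _ = m / q + q := by field_simp

theorem mul_ceil_div_sq_of_dvd {m q : ℕ} (h : q ^ 2 ∣ m) :
    (q : ℝ) * ⌈(m : ℝ) / q ^ 2⌉₊ = m / q := by
  obtain ⟨t, rfl⟩ := h
  rcases Nat.eq_zero_or_pos q with rfl | hq
  · simp
  · have hq' : (q : ℝ) ≠ 0 := by positivity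
    push_cast
    rw [mul_div_cancel_left₀ _ (pow_ne_zero 2 hq'), Nat.ceil_natCast]
    field_simp

theorem sub_add_one_div_eq {n r k : ℕ} (hk : 1 ≤ k) (hr : 1 < r) (hn : r * (k - 1) ≤ n) :
    ((n : ℝ) - k + 1) / ((r : ℝ) - 1) =
      (k - 1 : ℕ) + (n - r * (k - 1) : ℕ) / ((r - 1 : ℕ) : ℝ) := by
  have hr' : (r : ℝ) - 1 ≠ 0 := sub_ne_zero.mpr (by exact_mod_cast hr.ne')
  push_cast [hk, hn, hr.le]
  field_simp
  ring

theorem stmt14_general (n r k : ℕ) (hk : 1 ≤ k) (hn : r * (k - 1) ≤ n)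
    (hpp : IsPrimePow (r - 1)) :
    ∃ f : Sym2 (Fin n) → Fin r,
      (∀ (i : Fin r) (H : SimpleGraph (Fin n)) (A : Set (Fin n)),
        H ≤ colorGraph n r f i → IsKConnected k (H.induce A) →
          (A.ncard : ℝ) ≤ ((n : ℝ) - k + 1) / ((r : ℝ) - 1) + r) ∧
      ((r - 1) ^ 2 ∣ (n - r * (k - 1)) →
        ∀ (i : Fin r) (H : SimpleGraph (Fin n)) (A : Set (Fin n)),
          H ≤ colorGraph n r f i → IsKConnected k (H.induce A) →
            (A.ncard : ℝ) ≤ ((n : ℝ) - k + 1) / ((r : ℝ) - 1)) := by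
  obtain ⟨F, _, _, hF⟩ := exists_fintype_field_card_eq hpp
  classical
  have hq : 0 < r - 1 := hF ▸ Fintype.card_pos
  set m := n - r * (k - 1)
  set D := ⌈(m : ℝ) / ((r - 1 : ℕ) : ℝ) ^ 2⌉₊
  have hmD : m ≤ (r - 1) ^ 2 * D := le_sq_mul_ceil_div m hq
  obtain ⟨f, hf⟩ := AffinePlane.exists_colouring_ncard_le (F := F) (n := n) (r := r) (D := D)
    (by omega) (Nat.sub_lt hk one_pos) (by rw [hF]; omega)
  have hbound : ∀ i H A, H ≤ colorGraph n r f i → IsKConnected k (H.induce A) →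
      (A.ncard : ℝ) ≤ (k - 1 : ℕ) + (r - 1 : ℕ) * D := fun i H A hH hA => by
    exact_mod_cast hF ▸ hf i H A hH hA
  rw [sub_add_one_div_eq hk (by omega) hn]
  refine ⟨f, fun i H A hH hA => ?_, fun hdvd i H A hH hA => ?_⟩
  · have hqr : ((r - 1 : ℕ) : ℝ) ≤ r := by exact_mod_cast Nat.sub_le r 1
    linarith [hbound i H A hH hA, mul_ceil_div_sq_lt m hq]
  · linarith [hbound i H A hH hA, mul_ceil_div_sq_of_dvd hdvd]

theorem stmt14 (n r k : ℕ) (hk : 1 ≤ k) (hr : 2 ≤ r) (hn : r * (k - 1) ≤ n)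
    (hpp : IsPrimePow (r - 1)) :
    ∃ f : Sym2 (Fin n) → Fin r,
      (∀ (i : Fin r) (H : SimpleGraph (Fin n)) (A : Set (Fin n)),
        H ≤ colorGraph n r f i → IsKConnected k (H.induce A) →
          (A.ncard : ℝ) ≤ ((n : ℝ) - k + 1) / ((r : ℝ) - 1) + r) ∧
      ((r - 1) ^ 2 ∣ (n - r * (k - 1)) →
        ∀ (i : Fin r) (H : SimpleGraph (Fin n)) (A : Set (Fin n)),
          H ≤ colorGraph n r f i → IsKConnected k (H.induce A) →
            (A.ncard : ℝ) ≤ ((n : ℝ) - k + 1) / ((r : ℝ) - 1)) :=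
  stmt14_general n r k hk hn hpp
end

section
/- For every natural numbers n, k with k ≥ 1, there is a 3-colouring of E(K_n) whose largest monochromatic k-connected subgraph has at most (n-k+3)/2 vertices; that is, m(n,3,1,k) ≤ (n-k+3)/2. -/
/-!
Split the vertices into three blocks `W₀, W₁, W₂` of at most `k - 1` vertices and four near-equal
quarters `Y₀, …, Y₃` of the remaining `n - 3(k - 1)` vertices. Identify the quarters with the Klein
four-group `(Fin 4, ^^^)` and its three nonzero elements with the colours. An edge between two
quarters gets the colour of their difference, an edge between `Wᵢ` and a quarter gets colour `i`,
and an edge between `Wᵢ` and `Wⱼ` gets colour `-(i + j)`.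

Then colour `i` lives on two cliques `Wᵢ ∪ Y₀ ∪ Y_{i+1}` and `Wᵢ ∪ (the other two quarters)`, which
meet in `Wᵢ`, plus the complete bipartite graph between `W_{i+1}` and `W_{i+2}`. A `k`-connected
subgraph has minimum degree at least `k`, so it misses the bipartite part, which has a side of fewer
than `k` vertices. It cannot be separated by `Wᵢ` either, so it lies inside one of the two cliques,
and these have at most `k - 1 + (n - 3(k - 1) + 2) / 2` vertices. When `n < 3(k - 1)` the quarters
are empty and no colour has a `k`-connected subgraph at all.
-/

open SimpleGraph Set

theorem SimpleGraph.Reachable.mem_of_adj_closed {V : Type*} {G : SimpleGraph V} {X : Set V}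
    (hX : ∀ u v, G.Adj u v → u ∈ X → v ∈ X) {x y : V} (hxy : G.Reachable x y) (hx : x ∈ X) :
    y ∈ X := by
  rw [reachable_iff_reflTransGen] at hxy
  induction hxy with
  | refl => exact hx
  | tail _ huv hmem => exact hX _ _ huv hmem

theorem exists_ncard_preimage_le_sum {V L : Type*} [Fintype V] [Fintype L] (s : L → ℕ)
    (hs : Fintype.card V ≤ ∑ l, s l) :
    ∃ ℓ : V → L, ∀ b : Finset L, (ℓ ⁻¹' b).ncard ≤ ∑ l ∈ b, s l := by
  obtain ⟨e⟩ : Nonempty (V ↪ Σ l, Fin (s l)) :=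
    Function.Embedding.nonempty_of_card_le (by simpa using hs)
  refine ⟨fun v => (e v).1, fun b => ?_⟩
  calc ((fun v => (e v).1) ⁻¹' b).ncard
      ≤ ((b.sigma fun l => (Finset.univ : Finset (Fin (s l)))) : Set (Σ l, Fin (s l))).ncard :=
        ncard_le_ncard_of_injOn e (fun v hv => by simpa using hv) e.injective.injOn
    _ = ∑ l ∈ b, s l := by rw [ncard_coe_finset, Finset.card_sigma]; simp

namespace IsKConnected

variable {V : Type*} {k : ℕ} {G : SimpleGraph V}

theorem finite (hG : IsKConnected k G) : Finite V :=
  Nat.finite_of_card_ne_zero (by have := hG.1; omega)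

theorem eq_univ_or_eq_univ_of_ncard_inter_lt (hG : IsKConnected k G) {B₁ B₂ : Set V}
    (hcover : ∀ v, v ∈ B₁ ∨ v ∈ B₂) (hsep : (B₁ ∩ B₂).ncard < k)
    (hadj : ∀ u v, G.Adj u v → u ∈ B₁ → u ∉ B₂ → v ∈ B₁) : B₁ = univ ∨ B₂ = univ := by
  by_contra! h
  obtain ⟨x, hx⟩ := (ne_univ_iff_exists_notMem _).mp h.2
  obtain ⟨y, hy⟩ := (ne_univ_iff_exists_notMem _).mp h.1
  have hxS : x ∈ (B₁ ∩ B₂)ᶜ := fun h => hx h.2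
  have hyS : y ∈ (B₁ ∩ B₂)ᶜ := fun h => hy h.1
  exact hy <| ((hG.2 _ hsep).preconnected ⟨x, hxS⟩ ⟨y, hyS⟩).mem_of_adj_closed
    (X := {v : ↥(B₁ ∩ B₂)ᶜ | v.1 ∈ B₁}) (fun u v huv hu => hadj u v huv hu fun h => u.2 ⟨hu, h⟩)
    ((hcover x).resolve_right hx)

theorem le_ncard_neighborSet (hG : IsKConnected k G) (x : V) : k ≤ (G.neighborSet x).ncard := by
  have := hG.finite
  by_contra! hlt
  have hsep : (insert x (G.neighborSet x) ∩ {x}ᶜ).ncard < k := by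
    rw [insert_inter_of_notMem (by simp)]
    exact (ncard_le_ncard inter_subset_left).trans_lt hlt
  rcases hG.eq_univ_or_eq_univ_of_ncard_inter_lt (fun v => (em (v = x)).imp (· ▸ mem_insert v _) id)
    hsep (fun u v huv _ hu => mem_insert_of_mem _ (not_not.mp hu ▸ huv)) with h | h
  · have := ncard_insert_le x (G.neighborSet x)
    rw [h, ncard_univ] at this
    exact (hG.1.trans_le this).not_ge (by omega)
  · exact eq_univ_iff_forall.mp h x rfl

theorem eq_univ_or_eq_univ_of_adj (hG : IsKConnected k G) (hk : 1 ≤ k)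
    {B₁ B₂ P Q : Set V} (hcover : ∀ v, v ∈ B₁ ∨ v ∈ B₂ ∨ v ∈ P ∨ v ∈ Q)
    (hsep : (B₁ ∩ B₂).ncard < k) (hP : P.ncard < k)
    (hPQ : ∀ u v, G.Adj u v → u ∈ P → v ∈ Q) (hQP : ∀ u v, G.Adj u v → u ∈ Q → v ∈ P)
    (hB : ∀ u v, G.Adj u v → u ∈ B₁ → u ∉ B₂ → v ∈ B₁) : B₁ = univ ∨ B₂ = univ := by
  have := hG.finite
  have hQ (x : V) : x ∉ Q := fun hx =>
    ((hG.le_ncard_neighborSet x).trans (ncard_le_ncard fun v hv => hQP x v hv hx)).not_gt hP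
  have hP (x : V) : x ∉ P := fun hx => by
    have hN : G.neighborSet x = ∅ := eq_empty_of_forall_notMem fun v hv => hQ v (hPQ x v hv hx)
    have := hG.le_ncard_neighborSet x
    rw [hN, ncard_empty] at this
    omega
  exact hG.eq_univ_or_eq_univ_of_ncard_inter_lt (fun v => by simpa [hP, hQ] using hcover v) hsep hB

theorem subset_or_subset_of_adj [Finite V] {H : SimpleGraph V} {A : Set V}
    (hA : IsKConnected k (H.induce A)) (hk : 1 ≤ k)
    {B₁ B₂ P Q : Set V} (hcover : ∀ v, v ∈ B₁ ∨ v ∈ B₂ ∨ v ∈ P ∨ v ∈ Q)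
    (hsep : (B₁ ∩ B₂).ncard < k) (hP : P.ncard < k)
    (hPQ : ∀ u v, H.Adj u v → u ∈ P → v ∈ Q) (hQP : ∀ u v, H.Adj u v → u ∈ Q → v ∈ P)
    (hB : ∀ u v, H.Adj u v → u ∈ B₁ → u ∉ B₂ → v ∈ B₁) : A ⊆ B₁ ∨ A ⊆ B₂ := by
  have ncard_preimage_le (S : Set V) : (((↑) : A → V) ⁻¹' S).ncard ≤ S.ncard :=
    ncard_le_ncard_of_injOn _ (fun _ h => h) Subtype.val_injective.injOn
  simpa [preimage_eq_univ_iff] using hA.eq_univ_or_eq_univ_of_adj hk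
    (B₁ := ((↑) : A → V) ⁻¹' B₁) (B₂ := ((↑) : A → V) ⁻¹' B₂) (P := ((↑) : A → V) ⁻¹' P)
    (Q := ((↑) : A → V) ⁻¹' Q)
    (fun v => hcover v) ((ncard_preimage_le _).trans_lt hsep) ((ncard_preimage_le _).trans_lt hP)
    (fun u v h => hPQ u v h) (fun u v h => hQP u v h) (fun u v h => hB u v h)

end IsKConnected

namespace KleinColouring

/-- `Sum.inl i` labels the block `Wᵢ`, `Sum.inr a` the quarter `Yₐ`. -/
def labelColour : Fin 3 ⊕ Fin 4 → Fin 3 ⊕ Fin 4 → Fin 3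
  | .inl i, .inl j => -(i + j)
  | .inl i, .inr _ => i
  | .inr _, .inl j => j
  | .inr a, .inr b => Fin.ofNat 3 ((a ^^^ b).val - 1)

theorem labelColour_comm : ∀ a b, labelColour a b = labelColour b a := by decide

def labelColouring {V : Type*} (ℓ : V → Fin 3 ⊕ Fin 4) : Sym2 V → Fin 3 :=
  Sym2.lift ⟨fun u v => labelColour (ℓ u) (ℓ v), fun _ _ => labelColour_comm _ _⟩

def leftPair (i : Fin 3) : Finset (Fin 3 ⊕ Fin 4) := {.inl i, .inr 0, .inr i.succ}

def rightPair (i : Fin 3) : Finset (Fin 3 ⊕ Fin 4) :=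
  {.inl i, .inr (i + 1).succ, .inr (i + 2).succ}

theorem labelColour_eq_imp : ∀ i a b, labelColour a b = i →
    (a = .inl (i + 1) → b = .inl (i + 2)) ∧ (a = .inl (i + 2) → b = .inl (i + 1)) ∧
    (a ∈ leftPair i → a ∉ rightPair i → b ∈ leftPair i) := by
  decide

theorem mem_leftPair_or_mem_rightPair_or : ∀ i a,
    a ∈ leftPair i ∨ a ∈ rightPair i ∨ a = .inl (i + 1) ∨ a = .inl (i + 2) := by
  decide

theorem leftPair_inter_rightPair : ∀ i, leftPair i ∩ rightPair i = {.inl i} := by decide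

theorem IsKConnected.subset_leftPair_or_subset_rightPair {n k : ℕ} (hk : 1 ≤ k)
    {ℓ : Fin n → Fin 3 ⊕ Fin 4} (hW : ∀ j, (ℓ ⁻¹' {.inl j}).ncard < k) {i : Fin 3}
    {H : SimpleGraph (Fin n)} {A : Set (Fin n)} (hH : H ≤ colorGraph n 3 (labelColouring ℓ) i)
    (hA : IsKConnected k (H.induce A)) : A ⊆ ℓ ⁻¹' leftPair i ∨ A ⊆ ℓ ⁻¹' rightPair i := by
  have hcol {u v} (huv : H.Adj u v) := labelColour_eq_imp i (ℓ u) (ℓ v) (hH huv).2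
  refine hA.subset_or_subset_of_adj hk
    (P := ℓ ⁻¹' {Sum.inl (i + 1)}) (Q := ℓ ⁻¹' {Sum.inl (i + 2)})
    (fun v => by simpa using mem_leftPair_or_mem_rightPair_or i (ℓ v)) ?_ (hW _)
    (fun u v huv hu => (hcol huv).1 hu) (fun u v huv hu => (hcol huv).2.1 hu)
    (fun u v huv => (hcol huv).2.2)
  rw [← preimage_inter, ← Finset.coe_inter, leftPair_inter_rightPair, Finset.coe_singleton]
  exact hW i

def blockSize (n k : ℕ) : Fin 3 ⊕ Fin 4 → ℕ :=
  Sum.elim (fun _ => k - 1) (fun a => (n - 3 * (k - 1) + a) / 4)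

theorem le_sum_blockSize (n k : ℕ) : n ≤ ∑ l, blockSize n k l := by
  simp [blockSize, Fin.sum_univ_four]
  omega

theorem sum_leftPair_blockSize_le (n k : ℕ) (i : Fin 3) :
    ∑ l ∈ leftPair i, blockSize n k l ≤ k - 1 + (n - 3 * (k - 1) + 2) / 2 := by
  fin_cases i <;> simp [leftPair, blockSize] <;> omega

theorem sum_rightPair_blockSize_le (n k : ℕ) (i : Fin 3) :
    ∑ l ∈ rightPair i, blockSize n k l ≤ k - 1 + (n - 3 * (k - 1) + 2) / 2 := by
  fin_cases i <;> simp [rightPair, blockSize] <;> omega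

end KleinColouring

open KleinColouring

theorem stmt15 (n k : ℕ) (hk : 1 ≤ k) :
    ∃ f : Sym2 (Fin n) → Fin 3,
      ∀ (i : Fin 3) (H : SimpleGraph (Fin n)) (A : Set (Fin n)),
        H ≤ colorGraph n 3 f i → IsKConnected k (H.induce A) →
          (A.ncard : ℝ) ≤ ((n : ℝ) - k + 3) / 2 := by
  obtain ⟨ℓ, hℓ⟩ := exists_ncard_preimage_le_sum (V := Fin n) (blockSize n k)
    (by simpa using le_sum_blockSize n k)
  have hW (j : Fin 3) : (ℓ ⁻¹' {.inl j}).ncard < k := by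
    simpa [blockSize] using (hℓ {.inl j}).trans_lt (by simp [blockSize]; omega)
  refine ⟨labelColouring ℓ, fun i H A hH hA => ?_⟩
  have hA_lt : k < A.ncard := by simpa using hA.1
  have hA_le : A.ncard ≤ k - 1 + (n - 3 * (k - 1) + 2) / 2 := by
    rcases hA.subset_leftPair_or_subset_rightPair hk hW hH with h | h
    · exact (ncard_le_ncard h).trans ((hℓ _).trans (sum_leftPair_blockSize_le n k i))
    · exact (ncard_le_ncard h).trans ((hℓ _).trans (sum_rightPair_blockSize_le n k i))
  have h : ((2 * A.ncard + k : ℕ) : ℝ) ≤ (n + 3 : ℕ) := by exact_mod_cast (by omega)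
  push_cast at h
  linarith
end

section
/- Let k, p, q be natural numbers with 3p ≥ q ≥ p ≥ 24k, and let the edges of the complete bipartite graph K_{p,q} with parts P (|P| = p) and Q (|Q| = q) be 3-coloured so that each vertex of P sends at most k edges of colour 3 into Q and each vertex of Q sends at most k edges of colour 2 into P. Then the subgraph induced by colour-1 edges contains a k-connected subgraph G with |P \ V(G)| ≤ 16k and |Q \ V(G)| ≤ 8k; in particular |V(G)| ≥ p + q - 24k. -/
/-!
Colours 1, 2, 3 are `0, 1, 2 : Fin 3`. Call a vertex of P heavy if at least q/16 of its edges
have colour 2, and a vertex of Q heavy if at least p/8 of its edges have colour 3. Double counting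
against the degree bounds on the other side shows that at most 16k vertices of P and at most 8k
vertices of Q are heavy; delete them. If fewer than k further vertices are deleted, two surviving
vertices of P still have a common colour-1 neighbour in Q, because each of them has colour 2 or 3
towards fewer than q/16 + k vertices of Q, and 8k + k + 2(q/16 + k) < q. Likewise every surviving
vertex of Q keeps a colour-1 neighbour in P, as 16k + k + p/8 + k < p. Hence what is left is
connected.
-/

open Finset

theorem card_filter_card_le_mul_card_le {α β : Type*} [Fintype α] [Fintype β] [Nonempty β]
    (r : α → β → Prop) [∀ a b, Decidable (r a b)] {c k : ℕ}
    (h : ∀ b, #{a | r a b} ≤ k) :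
    #{a | Fintype.card β ≤ c * #{b | r a b}} ≤ c * k := by
  set s : Finset α := {a | Fintype.card β ≤ c * #{b | r a b}}
  have hs : #s * Fintype.card β ≤ c * k * Fintype.card β :=
    calc #s * Fintype.card β = ∑ _a ∈ s, Fintype.card β := by rw [sum_const, smul_eq_mul]
      _ ≤ ∑ a ∈ s, c * #{b | r a b} := sum_le_sum fun a ha => (mem_filter.1 ha).2
      _ ≤ ∑ a, c * #{b | r a b} := sum_le_sum_of_subset (subset_univ s)
      _ = c * ∑ b, #{a | r a b} := by
        rw [← mul_sum]; exact congrArg _ (sum_card_bipartiteAbove_eq_sum_card_bipartiteBelow r)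
      _ ≤ c * ∑ _b : β, k := by gcongr with b; exact h b
      _ = c * k * Fintype.card β := by rw [sum_const, card_univ, smul_eq_mul]; ring
  exact Nat.le_of_mul_le_mul_right hs Fintype.card_pos

theorem card_filter_apply_mem_le_ncard {α β : Type*} [Fintype α] [Finite β] {g : α → β}
    (hg : Function.Injective g) (S : Set β) [DecidablePred (g · ∈ S)] :
    #{x | g x ∈ S} ≤ S.ncard :=
  calc #{x | g x ∈ S} = (g ⁻¹' S).ncard := by rw [← Set.ncard_coe_finset, coe_filter_univ]; rfl
    _ = (g '' (g ⁻¹' S)).ncard := (Set.ncard_image_of_injective _ hg).symm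
    _ ≤ S.ncard := Set.ncard_le_ncard (Set.image_preimage_subset g S)

theorem card_filter_ne_zero_le {α : Type*} [Fintype α] (g : α → Fin 3) :
    #{x | g x ≠ 0} ≤ #{x | g x = 1} + #{x | g x = 2} := by
  classical
  refine (card_le_card fun x hx => ?_).trans (card_union_le _ _)
  simp only [mem_filter, mem_univ, true_and, mem_union] at hx ⊢
  omega

namespace SimpleGraph

theorem induce_connected_of_common_adj {V : Type*} (G : SimpleGraph V) {T X : Set V}
    (hne : (T ∩ X).Nonempty)
    (hX : ∀ x ∈ T ∩ X, ∀ y ∈ T ∩ X, ∃ z ∈ T, G.Adj x z ∧ G.Adj y z)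
    (hdom : ∀ w ∈ T \ X, ∃ x ∈ T ∩ X, G.Adj w x) :
    (G.induce T).Connected := by
  obtain ⟨x₀, hx₀⟩ := hne
  have reach : ∀ x (hx : x ∈ T ∩ X), (G.induce T).Reachable ⟨x, hx.1⟩ ⟨x₀, hx₀.1⟩ := by
    intro x hx
    obtain ⟨z, hz, hxz, hx₀z⟩ := hX x hx x₀ hx₀
    exact (induce_adj.2 hxz : (G.induce T).Adj ⟨x, hx.1⟩ ⟨z, hz⟩).reachable.trans
      (induce_adj.2 hx₀z).reachable.symm
  rw [connected_iff_exists_forall_reachable]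
  refine ⟨⟨x₀, hx₀.1⟩, fun ⟨w, hw⟩ => Reachable.symm ?_⟩
  by_cases hwX : w ∈ X
  · exact reach w ⟨hw, hwX⟩
  · obtain ⟨x, hx, hwx⟩ := hdom w ⟨hw, hwX⟩
    exact (induce_adj.2 hwx : (G.induce T).Adj ⟨w, hw⟩ ⟨x, hx.1⟩).reachable.trans (reach x hx)

end SimpleGraph

theorem isKConnected_induce {V : Type*} {G : SimpleGraph V} {A : Set V} {k : ℕ}
    (hk : k < A.ncard) (h : ∀ S : Set V, S.ncard < k → (G.induce (A \ S)).Connected) :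
    IsKConnected k (G.induce A) := by
  refine ⟨by rwa [Nat.card_coe_set_eq], fun S hS => ?_⟩
  have hconn := h (Subtype.val '' S) (by rwa [Set.ncard_image_of_injective _ Subtype.val_injective])
  let φ : G.induce (A \ Subtype.val '' S) →g (G.induce A).induce Sᶜ :=
    { toFun := fun v => ⟨⟨v.1, v.2.1⟩, fun hv => v.2.2 ⟨_, hv, rfl⟩⟩
      map_rel' := id }
  refine hconn.map φ fun ⟨⟨x, hxA⟩, hxS⟩ => ⟨⟨x, hxA, ?_⟩, rfl⟩
  rintro ⟨y, hy, rfl⟩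
  exact hxS hy

theorem bipColor_adj_inl_inr {m n r : ℕ} {f : Sym2 (Fin m ⊕ Fin n) → Fin r} {i : Fin r}
    {a : Fin m} {b : Fin n} (h : f s(Sum.inl a, Sum.inr b) = i) :
    (bipColor m n r f i).Adj (Sum.inl a) (Sum.inr b) :=
  ⟨by simp, h⟩

section Colouring

open Sum

variable {p q : ℕ} (f : Sym2 (Fin p ⊕ Fin q) → Fin 3)

def heavyLeft : Finset (Fin p) := {a | q ≤ 16 * #{b | f s(inl a, inr b) = 1}}

def heavyRight : Finset (Fin q) := {b | p ≤ 8 * #{a | f s(inl a, inr b) = 2}}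

def core : Set (Fin p ⊕ Fin q) := ↑((heavyLeft f)ᶜ.disjSum (heavyRight f)ᶜ)

variable {f} {k : ℕ}

@[simp]
theorem inl_mem_core {a : Fin p} : inl a ∈ core f ↔ a ∉ heavyLeft f := by
  simp [core]

@[simp]
theorem inr_mem_core {b : Fin q} : inr b ∈ core f ↔ b ∉ heavyRight f := by
  simp [core]

variable (f) in
theorem ncard_core_add_card_heavy :
    (core f).ncard + #(heavyLeft f) + #(heavyRight f) = p + q := by
  have hL := card_le_univ (heavyLeft f)
  have hR := card_le_univ (heavyRight f)
  rw [core, Set.ncard_coe_finset, card_disjSum, card_compl, card_compl]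
  simp only [Fintype.card_fin] at *
  omega

variable (f) in
theorem ncard_range_inl_diff_core : (Set.range inl \ core f).ncard = #(heavyLeft f) := by
  have : Set.range inl \ core f = inl '' ↑(heavyLeft f) := by
    ext (a | b) <;> simp
  rw [this, Set.ncard_image_of_injective _ inl_injective, Set.ncard_coe_finset]

variable (f) in
theorem ncard_range_inr_diff_core : (Set.range inr \ core f).ncard = #(heavyRight f) := by
  have : Set.range inr \ core f = inr '' ↑(heavyRight f) := by
    ext (a | b) <;> simp
  rw [this, Set.ncard_image_of_injective _ inr_injective, Set.ncard_coe_finset]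

theorem card_heavyLeft_le (hQ : ∀ b, #{a | f s(inl a, inr b) = 1} ≤ k) (hq : 0 < q) :
    #(heavyLeft f) ≤ 16 * k := by
  have : Nonempty (Fin q) := ⟨⟨0, hq⟩⟩
  simpa only [heavyLeft, Fintype.card_fin] using
    card_filter_card_le_mul_card_le (fun a b => f s(inl a, inr b) = 1) hQ

theorem card_heavyRight_le (hP : ∀ a, #{b | f s(inl a, inr b) = 2} ≤ k) (hp : 0 < p) :
    #(heavyRight f) ≤ 8 * k := by
  have : Nonempty (Fin p) := ⟨⟨0, hp⟩⟩
  simpa only [heavyRight, Fintype.card_fin] using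
    card_filter_card_le_mul_card_le (fun b a => f s(inl a, inr b) = 2) hP

theorem card_ne_zero_lt_of_notMem_heavyLeft (hP : ∀ a, #{b | f s(inl a, inr b) = 2} ≤ k)
    {a : Fin p} (ha : a ∉ heavyLeft f) :
    16 * #{b | f s(inl a, inr b) ≠ 0} < q + 16 * k := by
  have h := card_filter_ne_zero_le fun b => f s(inl a, inr b)
  have hP := hP a
  simp only [heavyLeft, mem_filter, mem_univ, true_and, not_le] at ha
  omega

theorem card_ne_zero_lt_of_notMem_heavyRight (hQ : ∀ b, #{a | f s(inl a, inr b) = 1} ≤ k)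
    {b : Fin q} (hb : b ∉ heavyRight f) :
    8 * #{a | f s(inl a, inr b) ≠ 0} < p + 8 * k := by
  have h := card_filter_ne_zero_le fun a => f s(inl a, inr b)
  have hQ := hQ b
  simp only [heavyRight, mem_filter, mem_univ, true_and, not_le] at hb
  omega

theorem exists_inr_common_zero (hP : ∀ a, #{b | f s(inl a, inr b) = 2} ≤ k)
    (hq : 24 * k ≤ q) {S : Set (Fin p ⊕ Fin q)} (hS : S.ncard < k) {a a' : Fin p}
    (ha : a ∉ heavyLeft f) (ha' : a' ∉ heavyLeft f) :
    ∃ b, b ∉ heavyRight f ∧ inr b ∉ S ∧ f s(inl a, inr b) = 0 ∧ f s(inl a', inr b) = 0 := by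
  classical
  have hR := card_heavyRight_le hP a.pos
  have hSq := card_filter_apply_mem_le_ncard inr_injective S
  have hfa := card_ne_zero_lt_of_notMem_heavyLeft hP ha
  have hfa' := card_ne_zero_lt_of_notMem_heavyLeft hP ha'
  set bad : Finset (Fin q) := heavyRight f ∪ ({b | inr b ∈ S} : Finset _) ∪
    ({b | f s(inl a, inr b) ≠ 0} : Finset _) ∪ ({b | f s(inl a', inr b) ≠ 0} : Finset _)
  have hbad : #bad < #(univ : Finset (Fin q)) := by
    grw [card_univ, Fintype.card_fin, card_union_le, card_union_le, card_union_le]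
    omega
  obtain ⟨b, -, hb⟩ := exists_mem_notMem_of_card_lt_card hbad
  simp only [bad, mem_union, mem_filter, mem_univ, true_and, not_or, ne_eq, not_not] at hb
  exact ⟨b, hb.1.1.1, hb.1.1.2, hb.1.2, hb.2⟩

theorem exists_inl_zero (hQ : ∀ b, #{a | f s(inl a, inr b) = 1} ≤ k)
    (hp : 24 * k ≤ p) {S : Set (Fin p ⊕ Fin q)} (hS : S.ncard < k) {b : Fin q}
    (hb : b ∉ heavyRight f) :
    ∃ a, a ∉ heavyLeft f ∧ inl a ∉ S ∧ f s(inl a, inr b) = 0 := by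
  classical
  have hL := card_heavyLeft_le hQ b.pos
  have hSp := card_filter_apply_mem_le_ncard inl_injective S
  have hfb := card_ne_zero_lt_of_notMem_heavyRight hQ hb
  set bad : Finset (Fin p) := heavyLeft f ∪ ({a | inl a ∈ S} : Finset _) ∪
    ({a | f s(inl a, inr b) ≠ 0} : Finset _)
  have hbad : #bad < #(univ : Finset (Fin p)) := by
    grw [card_univ, Fintype.card_fin, card_union_le, card_union_le]
    omega
  obtain ⟨a, -, ha⟩ := exists_mem_notMem_of_card_lt_card hbad
  simp only [bad, mem_union, mem_filter, mem_univ, true_and, not_or, ne_eq, not_not] at ha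
  exact ⟨a, ha.1.1, ha.1.2, ha.2⟩

theorem connected_induce_core_diff (hP : ∀ a, #{b | f s(inl a, inr b) = 2} ≤ k)
    (hQ : ∀ b, #{a | f s(inl a, inr b) = 1} ≤ k) (hp : 24 * k ≤ p) (hq : 24 * k ≤ q)
    {S : Set (Fin p ⊕ Fin q)} (hS : S.ncard < k) :
    ((bipColor p q 3 f 0).induce (core f \ S)).Connected := by
  classical
  obtain ⟨a₀, ha₀, ha₀S⟩ : ∃ a, a ∉ heavyLeft f ∧ inl a ∉ S := by
    have hL := card_heavyLeft_le hQ (by omega)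
    have hSp := card_filter_apply_mem_le_ncard inl_injective S
    have hbad : #(heavyLeft f ∪ ({a | inl a ∈ S} : Finset _)) < #(univ : Finset (Fin p)) := by
      grw [card_univ, Fintype.card_fin, card_union_le]
      omega
    obtain ⟨a, -, ha⟩ := exists_mem_notMem_of_card_lt_card hbad
    simp only [mem_union, mem_filter, mem_univ, true_and, not_or] at ha
    exact ⟨a, ha⟩
  refine (bipColor p q 3 f 0).induce_connected_of_common_adj (X := Set.range inl)
    ⟨inl a₀, ⟨inl_mem_core.2 ha₀, ha₀S⟩, a₀, rfl⟩ ?_ ?_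
  · rintro _ ⟨⟨ha, -⟩, a, rfl⟩ _ ⟨⟨ha', -⟩, a', rfl⟩
    obtain ⟨b, hb, hbS, hab, ha'b⟩ :=
      exists_inr_common_zero hP hq hS (inl_mem_core.1 ha) (inl_mem_core.1 ha')
    exact ⟨inr b, ⟨inr_mem_core.2 hb, hbS⟩, bipColor_adj_inl_inr hab, bipColor_adj_inl_inr ha'b⟩
  · rintro (a | b) ⟨⟨hb, -⟩, hX⟩
    · exact absurd ⟨a, rfl⟩ hX
    · obtain ⟨a, ha, haS, hab⟩ := exists_inl_zero hQ hp hS (inr_mem_core.1 hb)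
      exact ⟨inl a, ⟨⟨inl_mem_core.2 ha, haS⟩, a, rfl⟩, (bipColor_adj_inl_inr hab).symm⟩

end Colouring

theorem stmt17_general (k p q : ℕ) (hk : 1 ≤ k) (hpk : 24 * k ≤ p) (hpq : p ≤ q)
    (f : Sym2 (Fin p ⊕ Fin q) → Fin 3)
    (hP : ∀ a : Fin p, ({b : Fin q | f s(Sum.inl a, Sum.inr b) = 2}).ncard ≤ k)
    (hQ : ∀ b : Fin q, ({a : Fin p | f s(Sum.inl a, Sum.inr b) = 1}).ncard ≤ k) :
    ∃ A : Set (Fin p ⊕ Fin q),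
      IsKConnected k ((bipColor p q 3 f 0).induce A) ∧
      (Set.range (Sum.inl : Fin p → Fin p ⊕ Fin q) \ A).ncard ≤ 16 * k ∧
      (Set.range (Sum.inr : Fin q → Fin p ⊕ Fin q) \ A).ncard ≤ 8 * k ∧
      p + q - 24 * k ≤ A.ncard := by
  have hP' : ∀ a, #{b | f s(Sum.inl a, Sum.inr b) = 2} ≤ k := fun a => by
    simpa [Set.ncard_eq_toFinset_card'] using hP a
  have hQ' : ∀ b, #{a | f s(Sum.inl a, Sum.inr b) = 1} ≤ k := fun b => by
    simpa [Set.ncard_eq_toFinset_card'] using hQ b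
  have hL := card_heavyLeft_le hQ' (by omega)
  have hR := card_heavyRight_le hP' (by omega)
  have hcore := ncard_core_add_card_heavy f
  refine ⟨core f, isKConnected_induce (by omega)
    fun S hS => connected_induce_core_diff hP' hQ' hpk (hpk.trans hpq) hS, ?_, ?_, by omega⟩
  · rwa [ncard_range_inl_diff_core]
  · rwa [ncard_range_inr_diff_core]

theorem stmt17 (k p q : ℕ) (hk : 1 ≤ k) (hpk : 24 * k ≤ p) (hpq : p ≤ q)
    (hq3 : q ≤ 3 * p)
    (f : Sym2 (Fin p ⊕ Fin q) → Fin 3)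
    (hP : ∀ a : Fin p, ({b : Fin q | f s(Sum.inl a, Sum.inr b) = 2}).ncard ≤ k)
    (hQ : ∀ b : Fin q, ({a : Fin p | f s(Sum.inl a, Sum.inr b) = 1}).ncard ≤ k) :
    ∃ A : Set (Fin p ⊕ Fin q),
      IsKConnected k ((bipColor p q 3 f 0).induce A) ∧
      (Set.range (Sum.inl : Fin p → Fin p ⊕ Fin q) \ A).ncard ≤ 16 * k ∧
      (Set.range (Sum.inr : Fin q → Fin p ⊕ Fin q) \ A).ncard ≤ 8 * k ∧
      p + q - 24 * k ≤ A.ncard :=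
  stmt17_general k p q hk hpk hpq f hP hQ
end
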